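/- arXiv:0810.2207 — 5 statements merged into one kernel-verified Lean document; each statement's English description precedes it below -/
import Mathlib

section
/- Let Q be an IP-polygon of order o_Q = I and let F be a facet of Q with local index l_F. Then the number of lattice points on F satisfies |F ∩ ℤ²| ≤ 2I(l_F + 1) + 1. -/
/-!
Write `F ⊆ {⟨η, ·⟩ = l}` and `d = (-η₂, η₁)`, so that consecutive lattice points of `F` differ
by `d` and `|F ∩ ℤ²| - 1` is at most the length `c` of `F` measured in units of `d`. Since `0` is
interior, some vertex `y` of `Q` has height `⟨η, y⟩ = -g ≤ -1`. Coning `F` from `y` onto the line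
`⟨η, ·⟩ = 0` gives a segment of `Q` of length `g c / (g + l) ≥ c / (l + 1)` in units of `d`. On the
other hand `Q ∩ ℚ d ⊆ [-I, I] • d`: otherwise `I • d` or `-I • d` would lie in the interior of `Q`,
i.e. `±d` in the interior of `(1/I) • Q`. Hence `c ≤ 2 I (l + 1)`.
-/

open Pointwise

/-- The embedding of the lattice `ℤ²` into `ℚ²`. -/
def toQ (p : ℤ × ℤ) : ℚ × ℚ := ((p.1 : ℚ), (p.2 : ℚ))

/-- The pairing between the dual lattice `ℤ²` and `ℚ²`. -/
def pairQ (η : ℤ × ℤ) (x : ℚ × ℚ) : ℚ := (η.1 : ℚ) * x.1 + (η.2 : ℚ) * x.2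

/-- A lattice polygon: the convex hull of finitely many lattice points,
with nonempty interior. -/
def IsLatticePolygon (Q : Set (ℚ × ℚ)) : Prop :=
  (∃ S : Finset (ℤ × ℤ), Q = convexHull ℚ (toQ '' (S : Set (ℤ × ℤ)))) ∧
    (interior Q).Nonempty

/-- An IP-polygon: a lattice polygon containing the origin in its interior. -/
def IsIPPolygon (Q : Set (ℚ × ℚ)) : Prop :=
  IsLatticePolygon Q ∧ (0 : ℚ × ℚ) ∈ interior Q

/-- The vertices of a polygon are its extreme points. -/
def vertices (Q : Set (ℚ × ℚ)) : Set (ℚ × ℚ) := Set.extremePoints ℚ Q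

/-- An LDP-polygon: an IP-polygon all of whose vertices are primitive lattice points. -/
def IsLDPPolygon (Q : Set (ℚ × ℚ)) : Prop :=
  IsIPPolygon Q ∧ ∀ v ∈ vertices Q, ∃ p : ℤ × ℤ, Int.gcd p.1 p.2 = 1 ∧ v = toQ p

/-- `IsFacetWith Q η l F` : `F` is a facet (edge) of `Q` with primitive outer normal
`η` and local index `l`, i.e. `⟨η, x⟩ = l` on `F` and `⟨η, y⟩ ≤ l` on `Q`. -/
def IsFacetWith (Q : Set (ℚ × ℚ)) (η : ℤ × ℤ) (l : ℤ) (F : Set (ℚ × ℚ)) : Prop :=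
  Int.gcd η.1 η.2 = 1 ∧ 0 < l ∧
  (∀ y ∈ Q, pairQ η y ≤ (l : ℚ)) ∧
  F = {x ∈ Q | pairQ η x = (l : ℚ)} ∧
  ∃ x ∈ F, ∃ y ∈ F, x ≠ y

/-- `F` is a facet of `Q`. -/
def IsFacet (Q F : Set (ℚ × ℚ)) : Prop := ∃ η l, IsFacetWith Q η l F

/-- `HasMaxLocalIndex Q k` : the maximal local index `m_Q` of `Q` equals `k`. -/
def HasMaxLocalIndex (Q : Set (ℚ × ℚ)) (k : ℤ) : Prop :=
  (∃ F η, IsFacetWith Q η k F) ∧ ∀ F η l, IsFacetWith Q η l F → l ≤ k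

/-- `HasIndex Q ℓ` : the index `ℓ_Q` of `Q` (the lcm of all local indices) equals `ℓ`. -/
def HasIndex (Q : Set (ℚ × ℚ)) (ℓ : ℤ) : Prop :=
  0 < ℓ ∧ (∀ F η l, IsFacetWith Q η l F → l ∣ ℓ) ∧
  ∀ m : ℤ, 0 < m → (∀ F η l, IsFacetWith Q η l F → l ∣ m) → ℓ ∣ m

/-- The only lattice point in the interior of `(1/k)·Q` is the origin. -/
def NoIntLatticePts (Q : Set (ℚ × ℚ)) (k : ℤ) : Prop :=
  ∀ p : ℤ × ℤ, toQ p ∈ interior (((k : ℚ)⁻¹) • Q) → p = 0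

/-- `HasOrder Q I` : the order `o_Q` of `Q` equals `I`. -/
def HasOrder (Q : Set (ℚ × ℚ)) (I : ℤ) : Prop :=
  1 ≤ I ∧ NoIntLatticePts Q I ∧ ∀ k : ℤ, 1 ≤ k → NoIntLatticePts Q k → I ≤ k

/-- The cone `pos(F) = ℝ≥0·F` spanned by `F` (inside `ℚ²`). -/
def posCone (F : Set (ℚ × ℚ)) : Set (ℚ × ℚ) :=
  {y | ∃ t : ℚ, 0 ≤ t ∧ ∃ z ∈ F, y = t • z}

/-- The number of lattice points in a subset of `ℚ²`. -/
noncomputable def latticeCount (S : Set (ℚ × ℚ)) : ℕ :=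
  {p : ℤ × ℤ | toQ p ∈ S}.ncard

/-- The normalised volume of `Q`: twice the Euclidean area of the corresponding
real region. -/
noncomputable def nVol (Q : Set (ℚ × ℚ)) : ℝ :=
  2 * (MeasureTheory.volume
    (closure ((fun x : ℚ × ℚ => ((x.1 : ℝ), (x.2 : ℝ))) '' Q))).toReal

/-- Unimodular equivalence: `Q'` is the image of `Q` under an element of `GL(2,ℤ)`. -/
def UnimodEquiv (Q Q' : Set (ℚ × ℚ)) : Prop :=
  ∃ a b c d : ℤ, (a * d - b * c = 1 ∨ a * d - b * c = -1) ∧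
    (fun x : ℚ × ℚ => ((a : ℚ) * x.1 + (b : ℚ) * x.2,
      (c : ℚ) * x.1 + (d : ℚ) * x.2)) '' Q = Q'


open Filter Topology

def pairZ (η p : ℤ × ℤ) : ℤ := η.1 * p.1 + η.2 * p.2

def perp (η : ℤ × ℤ) : ℤ × ℤ := (-η.2, η.1)

/-- With Bézout coefficients `η.1 * a + η.2 * b = 1`, the covector `(-b, a)` is dual to `perp η`
in the basis `(a, b), perp η` of `ℤ²`. -/
def bezoutDual (η : ℤ × ℤ) : ℤ × ℤ := (-Int.gcdB η.1 η.2, Int.gcdA η.1 η.2)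

section Pairing

variable {η : ℤ × ℤ}

lemma pairQ_isLinearMap (η : ℤ × ℤ) : IsLinearMap ℚ (pairQ η) where
  map_add x y := by simp only [pairQ, Prod.fst_add, Prod.snd_add]; ring
  map_smul c x := by simp only [pairQ, Prod.smul_fst, Prod.smul_snd, smul_eq_mul]; ring

lemma pairQ_smul_add_smul (η : ℤ × ℤ) (a b : ℚ) (x y : ℚ × ℚ) :
    pairQ η (a • x + b • y) = a * pairQ η x + b * pairQ η y := by
  simp only [pairQ, Prod.fst_add, Prod.snd_add, Prod.smul_fst, Prod.smul_snd, smul_eq_mul]; ring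

lemma pairQ_toQ (η p : ℤ × ℤ) : pairQ η (toQ p) = pairZ η p := by
  simp [pairQ, toQ, pairZ]

lemma toQ_injective : Function.Injective toQ := fun p q h => by
  simp only [toQ, Prod.ext_iff, Int.cast_inj] at h
  exact Prod.ext h.1 h.2

lemma toQ_neg (p : ℤ × ℤ) : toQ (-p) = -toQ p := by
  simp [toQ]

lemma ne_zero_of_gcd_eq_one (hη : Int.gcd η.1 η.2 = 1) : η ≠ 0 := by
  rintro rfl
  simp at hη

lemma perp_ne_zero (hη : η ≠ 0) : perp η ≠ 0 := by
  contrapose! hη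
  simp_all [perp, Prod.ext_iff]

lemma pairQ_smul_toQ_self (η : ℤ × ℤ) (ε : ℚ) :
    pairQ η (ε • toQ η) = ε * ((η.1 : ℚ) ^ 2 + (η.2 : ℚ) ^ 2) := by
  simp only [pairQ, toQ, Prod.smul_fst, Prod.smul_snd, smul_eq_mul]; ring

lemma eq_smul_add_smul_perp (hη : Int.gcd η.1 η.2 = 1) (x : ℚ × ℚ) :
    x = pairQ η x • toQ (Int.gcdA η.1 η.2, Int.gcdB η.1 η.2) +
      pairQ (bezoutDual η) x • toQ (perp η) := by
  have bezout : (η.1 : ℚ) * Int.gcdA η.1 η.2 + η.2 * Int.gcdB η.1 η.2 = 1 := by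
    exact_mod_cast (hη ▸ Int.gcd_eq_gcd_ab η.1 η.2).symm
  ext <;> simp only [pairQ, toQ, bezoutDual, perp, Prod.fst_add, Prod.snd_add, Prod.smul_fst,
    Prod.smul_snd, smul_eq_mul, Int.cast_neg]
  · linear_combination -x.1 * bezout
  · linear_combination -x.2 * bezout

lemma eq_smul_perp_of_pairQ_eq_zero (hη : Int.gcd η.1 η.2 = 1) {w : ℚ × ℚ}
    (hw : pairQ η w = 0) : w = pairQ (bezoutDual η) w • toQ (perp η) := by
  conv_lhs => rw [eq_smul_add_smul_perp hη w, hw, zero_smul, zero_add]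

lemma eq_of_pairQ_eq_of_pairQ_bezoutDual_eq (hη : Int.gcd η.1 η.2 = 1) {x y : ℚ × ℚ}
    (h : pairQ η x = pairQ η y) (h' : pairQ (bezoutDual η) x = pairQ (bezoutDual η) y) :
    x = y := by
  rw [eq_smul_add_smul_perp hη x, eq_smul_add_smul_perp hη y, h, h']

end Pairing

section Convex

variable {Q : Set (ℚ × ℚ)}

lemma exists_pairQ_neg_of_zero_mem_interior (h0 : (0 : ℚ × ℚ) ∈ interior Q) {η : ℤ × ℤ}
    (hη : η ≠ 0) : ∃ x ∈ Q, pairQ η x < 0 := by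
  have hmem : ∀ᶠ ε in 𝓝[<] (0 : ℚ), ε • toQ η ∈ Q :=
    nhdsWithin_le_nhds <| ((continuous_id.smul continuous_const).tendsto' (0 : ℚ) 0
      (zero_smul ℚ (toQ η))).eventually (mem_interior_iff_mem_nhds.mp h0)
  obtain ⟨ε, hεQ, hε⟩ := (hmem.and self_mem_nhdsWithin).exists
  have hη' : (η.1 : ℚ) ≠ 0 ∨ (η.2 : ℚ) ≠ 0 := by
    contrapose! hη
    exact Prod.ext (Int.cast_eq_zero.mp hη.1) (Int.cast_eq_zero.mp hη.2)
  have hsq : (0 : ℚ) < (η.1 : ℚ) ^ 2 + (η.2 : ℚ) ^ 2 := by rcases hη' with h | h <;> positivity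
  exact ⟨ε • toQ η, hεQ, pairQ_smul_toQ_self η ε ▸ mul_neg_of_neg_of_pos hε hsq⟩

lemma exists_pairZ_le_neg_one_of_mem_convexHull {S : Finset (ℤ × ℤ)}
    (hQS : Q = convexHull ℚ (toQ '' (S : Set (ℤ × ℤ)))) {η : ℤ × ℤ} {x : ℚ × ℚ} (hx : x ∈ Q)
    (hneg : pairQ η x < 0) : ∃ p ∈ S, pairZ η p ≤ -1 := by
  by_contra! hS
  have hsub : Q ⊆ {x | 0 ≤ pairQ η x} := by
    rw [hQS]
    refine convexHull_min ?_ (convex_halfSpace_ge (pairQ_isLinearMap η) 0)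
    rintro _ ⟨p, hp, rfl⟩
    have : 0 ≤ pairZ η p := by linarith [hS p hp]
    simpa [pairQ_toQ] using this
  exact (hsub hx).not_gt hneg

end Convex

lemma Convex.smul_mem_interior_of_zero_mem_interior {𝕜 E : Type*} [Field 𝕜] [LinearOrder 𝕜]
    [IsStrictOrderedRing 𝕜] [AddCommGroup E] [Module 𝕜 E] [TopologicalSpace E]
    [IsTopologicalAddGroup E] [ContinuousConstSMul 𝕜 E] {s : Set E} (hs : Convex 𝕜 s)
    (h0 : (0 : E) ∈ interior s) {x : E} (hx : x ∈ s) {t : 𝕜} (ht0 : 0 ≤ t) (ht1 : t < 1) :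
    t • x ∈ interior s := by
  simpa using hs.combo_interior_self_mem_interior h0 hx (sub_pos.mpr ht1) ht0 (sub_add_cancel 1 t)

namespace NoIntLatticePts

variable {Q : Set (ℚ × ℚ)} {k : ℤ}

lemma eq_zero_of_smul_mem_interior (h : NoIntLatticePts Q k) (hk : k ≠ 0) {p : ℤ × ℤ}
    (hp : (k : ℚ) • toQ p ∈ interior Q) : p = 0 := by
  have hk' : (k : ℚ)⁻¹ ≠ 0 := inv_ne_zero (Int.cast_ne_zero.mpr hk)
  apply h p
  rwa [interior_smul₀ hk', Set.mem_smul_set_iff_inv_smul_mem₀ hk', inv_inv]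

lemma le_of_smul_toQ_mem (h : NoIntLatticePts Q k) (hQ : Convex ℚ Q)
    (h0 : (0 : ℚ × ℚ) ∈ interior Q) (hk : 0 < k) {p : ℤ × ℤ} (hp : p ≠ 0) {s : ℚ}
    (hs : s • toQ p ∈ Q) : s ≤ k := by
  by_contra! hks
  have hk' : (0 : ℚ) < k := Int.cast_pos.mpr hk
  have hs0 : 0 < s := hk'.trans hks
  have := hQ.smul_mem_interior_of_zero_mem_interior h0 hs (div_pos hk' hs0).le
    ((div_lt_one hs0).mpr hks)
  rw [smul_smul, div_mul_cancel₀ _ hs0.ne'] at this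
  exact hp (h.eq_zero_of_smul_mem_interior hk.ne' this)

lemma abs_pairQ_bezoutDual_le (h : NoIntLatticePts Q k) (hQ : Convex ℚ Q)
    (h0 : (0 : ℚ × ℚ) ∈ interior Q) (hk : 0 < k) {η : ℤ × ℤ} (hη : Int.gcd η.1 η.2 = 1)
    {w : ℚ × ℚ} (hw : w ∈ Q) (hw0 : pairQ η w = 0) : |pairQ (bezoutDual η) w| ≤ k := by
  have hperp := perp_ne_zero (ne_zero_of_gcd_eq_one hη)
  have hw' := eq_smul_perp_of_pairQ_eq_zero hη hw0
  refine abs_le.mpr ⟨?_, h.le_of_smul_toQ_mem hQ h0 hk hperp (hw' ▸ hw)⟩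
  have : (-pairQ (bezoutDual η) w) • toQ (-perp η) ∈ Q := by
    rwa [toQ_neg, neg_smul_neg, ← hw']
  linarith [h.le_of_smul_toQ_mem hQ h0 hk (neg_ne_zero.mpr hperp) this]

lemma mul_pairQ_bezoutDual_sub_le (h : NoIntLatticePts Q k) (hQ : Convex ℚ Q)
    (h0 : (0 : ℚ × ℚ) ∈ interior Q) (hk : 0 < k) {η : ℤ × ℤ} (hη : Int.gcd η.1 η.2 = 1)
    {l g : ℚ} (hl : 0 ≤ l) (hg : 0 < g) {x x' y : ℚ × ℚ} (hx : x ∈ Q) (hx' : x' ∈ Q) (hy : y ∈ Q)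
    (hxl : pairQ η x = l) (hx'l : pairQ η x' = l) (hyg : pairQ η y = -g) :
    g * (pairQ (bezoutDual η) x - pairQ (bezoutDual η) x') ≤ 2 * k * (g + l) := by
  have hgl : 0 < g + l := by linarith
  set a := g / (g + l)
  set b := l / (g + l)
  have ha : 0 ≤ a := by positivity
  have hb : 0 ≤ b := by positivity
  have hab : a + b = 1 := by rw [← add_div, div_self hgl.ne']
  have height_zero : ∀ z, pairQ η z = l → pairQ η (a • z + b • y) = 0 := by
    intro z hz
    rw [pairQ_smul_add_smul, hz, hyg]
    field_simp
    ring
  have bound := fun z (hz : z ∈ Q) (hzl : pairQ η z = l) =>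
    abs_le.mp (h.abs_pairQ_bezoutDual_le hQ h0 hk hη (hQ hz hy ha hb hab) (height_zero z hzl))
  have hbx := (bound x hx hxl).2
  have hbx' := (bound x' hx' hx'l).1
  rw [pairQ_smul_add_smul] at hbx hbx'
  calc g * (pairQ (bezoutDual η) x - pairQ (bezoutDual η) x')
      = (g + l) * (a * (pairQ (bezoutDual η) x - pairQ (bezoutDual η) x')) := by
        simp only [a]; field_simp
    _ ≤ (g + l) * (2 * k) := mul_le_mul_of_nonneg_left (by linarith) hgl.le
    _ = 2 * k * (g + l) := by ring

lemma pairZ_bezoutDual_sub_le (h : NoIntLatticePts Q k) (hQ : Convex ℚ Q)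
    (h0 : (0 : ℚ × ℚ) ∈ interior Q) (hk : 0 < k) {η : ℤ × ℤ} (hη : Int.gcd η.1 η.2 = 1)
    {l : ℤ} (hl : 0 ≤ l) {p q y : ℤ × ℤ} (hp : toQ p ∈ Q) (hq : toQ q ∈ Q) (hy : toQ y ∈ Q)
    (hpl : pairQ η (toQ p) = l) (hql : pairQ η (toQ q) = l) (hy1 : pairZ η y ≤ -1) :
    pairZ (bezoutDual η) p - pairZ (bezoutDual η) q ≤ 2 * k * (l + 1) := by
  set g := -pairZ η y
  have hg : 0 < g := by omega
  have hgΔ : g * (pairZ (bezoutDual η) p - pairZ (bezoutDual η) q) ≤ 2 * k * (g + l) := by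
    have := h.mul_pairQ_bezoutDual_sub_le hQ h0 hk hη (l := l) (g := g) (by positivity)
      (by positivity) hp hq hy hpl hql (by rw [pairQ_toQ]; push_cast [g]; ring)
    simp only [pairQ_toQ] at this
    exact_mod_cast this
  refine le_of_mul_le_mul_left (hgΔ.trans ?_) hg
  nlinarith [mul_nonneg (mul_nonneg hk.le hl) (by omega : 0 ≤ g - 1)]

end NoIntLatticePts

lemma Int.ncard_le_of_forall_sub_le {s : Set ℤ} {K : ℤ} (hK : 0 ≤ K)
    (h : ∀ a ∈ s, ∀ b ∈ s, a - b ≤ K) : (s.ncard : ℤ) ≤ K + 1 := by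
  rcases s.eq_empty_or_nonempty with rfl | ⟨a₀, ha₀⟩
  · simp only [Set.ncard_empty, Nat.cast_zero]; omega
  have hfin : s.Finite := (Set.finite_Icc (a₀ - K) (a₀ + K)).subset fun a ha =>
    ⟨by linarith [h a₀ ha₀ a ha], by linarith [h a ha a₀ ha₀]⟩
  obtain ⟨m, hm, hmin⟩ := Set.exists_min_image s id hfin ⟨a₀, ha₀⟩
  have hsub : s ⊆ Set.Icc m (m + K) := fun a ha => ⟨hmin a ha, by linarith [h a ha m hm]⟩
  calc (s.ncard : ℤ) ≤ (Set.Icc m (m + K)).ncard := by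
        exact_mod_cast Set.ncard_le_ncard hsub (Set.finite_Icc _ _)
    _ = K + 1 := by
        rw [← Finset.coe_Icc, Set.ncard_coe_finset, Int.card_Icc_of_le _ _ (by omega)]
        ring

/-- If `Q` is an IP-polygon of order `I` and `F` is a facet of `Q` with local index
`l`, then `|F ∩ ℤ²| ≤ 2I(l + 1) + 1`. -/
theorem facet_lattice_points_bound_by_order
    (Q : Set (ℚ × ℚ)) (F : Set (ℚ × ℚ)) (η : ℤ × ℤ) (I l : ℤ)
    (hQ : IsIPPolygon Q) (hI : HasOrder Q I) (hF : IsFacetWith Q η l F) :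
    (latticeCount F : ℤ) ≤ 2 * I * (l + 1) + 1 := by
  obtain ⟨⟨⟨S, hQS⟩, -⟩, h0⟩ := hQ
  obtain ⟨hI1, hIQ, -⟩ := hI
  obtain ⟨hη, hl, -, rfl, -⟩ := hF
  have hQ : Convex ℚ Q := hQS ▸ convex_convexHull ℚ _
  obtain ⟨x, hxQ, hxneg⟩ := exists_pairQ_neg_of_zero_mem_interior h0 (ne_zero_of_gcd_eq_one hη)
  obtain ⟨y, hyS, hy⟩ := exists_pairZ_le_neg_one_of_mem_convexHull hQS hxQ hxneg
  have hyQ : toQ y ∈ Q := hQS ▸ subset_convexHull ℚ _ ⟨y, hyS, rfl⟩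
  set T := {p : ℤ × ℤ | toQ p ∈ {x ∈ Q | pairQ η x = l}}
  have hinj : Set.InjOn (pairZ (bezoutDual η)) T := fun p hp q hq hpq => by
    refine toQ_injective (eq_of_pairQ_eq_of_pairQ_bezoutDual_eq hη (hp.2.trans hq.2.symm) ?_)
    rw [pairQ_toQ, pairQ_toQ, hpq]
  have hwidth : ∀ a ∈ pairZ (bezoutDual η) '' T, ∀ b ∈ pairZ (bezoutDual η) '' T,
      a - b ≤ 2 * I * (l + 1) := by
    rintro _ ⟨p, ⟨hpQ, hpl⟩, rfl⟩ _ ⟨q, ⟨hqQ, hql⟩, rfl⟩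
    exact hIQ.pairZ_bezoutDual_sub_le hQ h0 (by omega) hη hl.le hpQ hqQ hyQ hpl hql hy
  calc (latticeCount _ : ℤ) = (pairZ (bezoutDual η) '' T).ncard := by
        rw [hinj.ncard_image]; rfl
    _ ≤ 2 * I * (l + 1) + 1 := Int.ncard_le_of_forall_sub_le (by positivity) hwidth
end

section
/- Let Q be an IP-polygon of order o_Q = I and let F be a facet of Q with local index l_F. If |F ∩ ℤ²| = 2I(l_F + 1) + 1, then l_F ≤ I and Q is unimodularly equivalent to the triangle with vertices (−I(l_F+1), l_F), (I(l_F+1), l_F), and (0, −1). -/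
open Pointwise

/-!
After a unimodular change of coordinates, `F` lies on the line `y = l` and `Q` below it. The order
condition says that `I • p` lies outside the interior of `Q` for every lattice point `p ≠ 0`; by
convexity (`0` is interior) `Q` meets the horizontal axis inside `[-I, I]`, and a multiple of `l`
on `F` gives `l ≤ I`. The facet `F` has length at least `2I(l+1)`: intersecting the chords from its
endpoints to a point of `Q` below the axis with the axis shows that `Q` lies in `y ≥ -1`. Hence
some vertex of `Q` is a lattice point `(c, -1)`, the same chord estimates pin `F` down to the
segment from `(-I(l+1) - cl, l)` to `(I(l+1) - cl, l)`, and `Q` is the triangle spanned by this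
segment and `(c, -1)`; the shear `(x, y) ↦ (x + cy, y)` brings it to normal form.
-/
def intMat (R : Type*) [CommRing R] (a b c d : ℤ) : R × R →ₗ[R] R × R where
  toFun x := ((a : R) * x.1 + (b : R) * x.2, (c : R) * x.1 + (d : R) * x.2)
  map_add' x y := by ext <;> simp only [Prod.fst_add, Prod.snd_add] <;> ring
  map_smul' r x := by
    ext <;> simp only [Prod.smul_fst, Prod.smul_snd, smul_eq_mul, RingHom.id_apply] <;> ring

section IntMat

variable {R : Type*} [CommRing R] {a b c d : ℤ}

@[simp]
lemma intMat_apply (x : R × R) :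
    intMat R a b c d x = ((a : R) * x.1 + (b : R) * x.2, (c : R) * x.1 + (d : R) * x.2) := rfl

lemma intMat_toQ (p : ℤ × ℤ) : intMat ℚ a b c d (toQ p) = toQ (intMat ℤ a b c d p) := by
  simp [toQ]

lemma continuous_intMat : Continuous (intMat ℚ a b c d) := by
  simp only [intMat, LinearMap.coe_mk, AddHom.coe_mk]
  fun_prop

variable (h : a * d - b * c = 1)
include h

lemma intMat_adjugate_intMat (x : R × R) : intMat R d (-b) (-c) a (intMat R a b c d x) = x := by
  have h' : (a : R) * d - b * c = 1 := by exact_mod_cast congrArg (Int.cast : ℤ → R) h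
  ext <;> simp only [intMat_apply, Int.cast_neg]
  · linear_combination x.1 * h'
  · linear_combination x.2 * h'

lemma intMat_intMat_adjugate (x : R × R) : intMat R a b c d (intMat R d (-b) (-c) a x) = x := by
  simpa using intMat_adjugate_intMat (R := R) (a := d) (b := -b) (c := -c) (d := a)
    (by linear_combination h) x

def intMatHomeomorph : (ℚ × ℚ) ≃ₜ ℚ × ℚ where
  toFun := intMat ℚ a b c d
  invFun := intMat ℚ d (-b) (-c) a
  left_inv := intMat_adjugate_intMat h
  right_inv := intMat_intMat_adjugate h
  continuous_toFun := continuous_intMat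
  continuous_invFun := continuous_intMat

lemma toQ_mem_intMat_image_iff (s : Set (ℚ × ℚ)) (p : ℤ × ℤ) :
    toQ p ∈ intMat ℚ a b c d '' s ↔ toQ (intMat ℤ d (-b) (-c) a p) ∈ s := by
  rw [← intMat_toQ]
  constructor
  · rintro ⟨x, hx, hxp⟩
    rwa [← hxp, intMat_adjugate_intMat h]
  · exact fun hp => ⟨_, hp, intMat_intMat_adjugate h _⟩

lemma interior_intMat_image (s : Set (ℚ × ℚ)) :
    interior (intMat ℚ a b c d '' s) = intMat ℚ a b c d '' interior s :=
  ((intMatHomeomorph h).image_interior s).symm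

lemma latticeCount_intMat_image (s : Set (ℚ × ℚ)) :
    latticeCount (intMat ℚ a b c d '' s) = latticeCount s := by
  have hset : {p : ℤ × ℤ | toQ p ∈ intMat ℚ a b c d '' s} =
      intMat ℤ a b c d '' {p | toQ p ∈ s} := by
    ext p
    rw [Set.mem_ofPred_eq, toQ_mem_intMat_image_iff h]
    constructor
    · exact fun hp => ⟨_, hp, intMat_intMat_adjugate h p⟩
    · rintro ⟨q, hq, rfl⟩
      rwa [intMat_adjugate_intMat h]
  rw [latticeCount, hset, Set.ncard_image_of_injective _
    (Function.LeftInverse.injective (intMat_adjugate_intMat h))]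
  rfl

lemma NoIntLatticePts.intMat_image {Q : Set (ℚ × ℚ)} {k : ℤ} (hQ : NoIntLatticePts Q k) :
    NoIntLatticePts (intMat ℚ a b c d '' Q) k := by
  intro p hp
  rw [← image_smul_set, interior_intMat_image h, toQ_mem_intMat_image_iff h] at hp
  have := congrArg (intMat ℤ a b c d) (hQ _ hp)
  rwa [intMat_intMat_adjugate h, map_zero] at this

end IntMat

lemma UnimodEquiv.trans {Q Q' Q'' : Set (ℚ × ℚ)} (h₁ : UnimodEquiv Q Q') (h₂ : UnimodEquiv Q' Q'') :
    UnimodEquiv Q Q'' := by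
  obtain ⟨a, b, c, d, hdet, rfl⟩ := h₁
  obtain ⟨a', b', c', d', hdet', rfl⟩ := h₂
  refine ⟨a' * a + b' * c, a' * b + b' * d, c' * a + d' * c, c' * b + d' * d, ?_, ?_⟩
  · have hmul : (a' * a + b' * c) * (c' * b + d' * d) - (a' * b + b' * d) * (c' * a + d' * c) =
        (a' * d' - b' * c') * (a * d - b * c) := by ring
    rw [hmul]
    rcases hdet with h | h <;> rcases hdet' with h' | h' <;> simp [h, h']
  · rw [Set.image_image]
    congr 1
    funext x
    push_cast
    ext <;> ring

lemma unimodEquiv_intMat_image {a b c d : ℤ} (h : a * d - b * c = 1) (Q : Set (ℚ × ℚ)) :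
    UnimodEquiv Q (intMat ℚ a b c d '' Q) :=
  ⟨a, b, c, d, Or.inl h, rfl⟩

lemma Convex.smul_mem_interior_of_lt_one {Q : Set (ℚ × ℚ)} (hQ : Convex ℚ Q)
    (h0 : (0 : ℚ × ℚ) ∈ interior Q) {z : ℚ × ℚ} (hz : z ∈ Q) {t : ℚ} (ht0 : 0 ≤ t) (ht1 : t < 1) :
    t • z ∈ interior Q := by
  simpa using hQ.combo_interior_self_mem_interior h0 hz (sub_pos.2 ht1) ht0 (sub_add_cancel 1 t)

lemma Convex.mk_mem_of_le_of_le {Q : Set (ℚ × ℚ)} (hQ : Convex ℚ Q) {a b x y : ℚ}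
    (ha : (a, y) ∈ Q) (hb : (b, y) ∈ Q) (hax : a ≤ x) (hxb : x ≤ b) : (x, y) ∈ Q := by
  apply hQ.segment_subset ha hb
  rw [← Prod.image_mk_segment_left, segment_eq_Icc (hax.trans hxb)]
  exact ⟨x, ⟨hax, hxb⟩, rfl⟩

lemma Convex.abs_mul_sub_mul_le {Q : Set (ℚ × ℚ)} (hQ : Convex ℚ Q) {r : ℚ}
    (hax : ∀ x : ℚ, (x, 0) ∈ Q → |x| ≤ r) {p q : ℚ × ℚ} (hp : p ∈ Q) (hq : q ∈ Q)
    (hp2 : 0 ≤ p.2) (hq2 : q.2 ≤ 0) :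
    |p.2 * q.1 - q.2 * p.1| ≤ r * (p.2 - q.2) := by
  rcases (sub_nonneg.2 (hq2.trans hp2)).eq_or_lt with hd | hd
  · have hp0 : p.2 = 0 := by linarith
    have hq0 : q.2 = 0 := by linarith
    simp [hp0, hq0]
  · -- the point where the segment from `q` to `p` crosses the horizontal axis
    have hmem : (p.2 / (p.2 - q.2)) • q + (-q.2 / (p.2 - q.2)) • p ∈ Q :=
      hQ hq hp (div_nonneg hp2 hd.le) (div_nonneg (neg_nonneg.2 hq2) hd.le)
        (by field_simp; ring)
    have hpt : (p.2 / (p.2 - q.2)) • q + (-q.2 / (p.2 - q.2)) • p =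
        ((p.2 * q.1 - q.2 * p.1) / (p.2 - q.2), 0) := by
      ext <;> simp only [Prod.fst_add, Prod.snd_add, Prod.smul_fst, Prod.smul_snd, smul_eq_mul]
        <;> field_simp <;> ring
    have := hax _ (hpt ▸ hmem)
    rwa [abs_div, abs_of_pos hd, div_le_iff₀ hd] at this

lemma exists_mem_snd_neg_of_zero_mem_interior {Q : Set (ℚ × ℚ)} (h0 : (0 : ℚ × ℚ) ∈ interior Q) :
    ∃ q ∈ Q, q.2 < 0 := by
  obtain ⟨ε, hε, hball⟩ := Metric.mem_nhds_iff.1 (mem_interior_iff_mem_nhds.1 h0)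
  obtain ⟨δ, hδ, hδε⟩ := exists_rat_btwn hε
  have hδ' : (0 : ℚ) < δ := by exact_mod_cast hδ
  refine ⟨(0, -δ), hball ?_, by simpa using hδ'⟩
  rw [Metric.mem_ball, Prod.dist_eq]
  simpa [hε, ← Rat.norm_cast_real, abs_of_pos hδ] using hδε

lemma exists_mk_neg_one_mem_of_convexHull {Q : Set (ℚ × ℚ)} {S : Set (ℤ × ℤ)}
    (hS : Q = convexHull ℚ (toQ '' S)) (h0 : (0 : ℚ × ℚ) ∈ interior Q)
    (hdepth : ∀ q ∈ Q, -1 ≤ q.2) : ∃ c : ℤ, ((c : ℚ), (-1 : ℚ)) ∈ Q := by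
  obtain ⟨s, hsS, hs⟩ : ∃ s ∈ S, s.2 < 0 := by
    by_contra! hS'
    obtain ⟨q, hq, hq2⟩ := exists_mem_snd_neg_of_zero_mem_interior h0
    have hsub : Q ⊆ {x | 0 ≤ x.2} := by
      rw [hS]
      refine convexHull_min ?_ (convex_halfSpace_ge (LinearMap.snd ℚ ℚ ℚ).isLinear 0)
      rintro _ ⟨s, hs, rfl⟩
      exact (by exact_mod_cast hS' s hs : (0 : ℚ) ≤ s.2)
    exact (hsub hq).not_gt hq2
  have hsQ : toQ s ∈ Q := hS ▸ subset_convexHull ℚ _ ⟨s, hsS, rfl⟩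
  have hs1 : s.2 = -1 := by
    have : (-1 : ℚ) ≤ s.2 := hdepth _ hsQ
    have : (-1 : ℤ) ≤ s.2 := by exact_mod_cast this
    omega
  exact ⟨s.1, by simpa [toQ, hs1] using hsQ⟩

lemma exists_mk_mem_of_latticeCount {Q : Set (ℚ × ℚ)} {l n : ℤ}
    (h : (latticeCount {x ∈ Q | x.2 = l} : ℤ) = n) (hn : 0 < n) :
    ∃ a b : ℤ, toQ (a, l) ∈ Q ∧ toQ (b, l) ∈ Q ∧ n ≤ b - a + 1 := by
  set P := {p : ℤ × ℤ | toQ p ∈ {x ∈ Q | x.2 = l}}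
  have hPl : ∀ p ∈ P, p = (p.1, l) := fun p hp => Prod.ext rfl (Int.cast_injective hp.2)
  have hPcard : (P.ncard : ℤ) = n := h
  have hPfin : P.Finite := Set.finite_of_ncard_pos (by omega)
  have hPne : P.Nonempty := Set.nonempty_of_ncard_ne_zero (by omega)
  obtain ⟨p, hp, hpmin⟩ := Set.exists_min_image P Prod.fst hPfin hPne
  obtain ⟨q, hq, hqmax⟩ := Set.exists_max_image P Prod.fst hPfin hPne
  refine ⟨p.1, q.1, (hPl p hp ▸ hp).1, (hPl q hq ▸ hq).1, ?_⟩
  have hsub : P ⊆ ↑((Finset.Icc p.1 q.1).image fun m => (m, l)) := by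
    intro x hx
    rw [Finset.coe_image, Finset.coe_Icc]
    exact ⟨x.1, ⟨hpmin x hx, hqmax x hx⟩, (hPl x hx).symm⟩
  have hle := (Set.ncard_le_ncard hsub (Finset.finite_toSet _)).trans_eq
    (Set.ncard_coe_finset _) |>.trans Finset.card_image_le
  rw [Int.card_Icc] at hle
  omega

lemma NoIntLatticePts.smul_toQ_not_mem_interior {Q : Set (ℚ × ℚ)} {k : ℤ}
    (hQ : NoIntLatticePts Q k) (hk : k ≠ 0) {p : ℤ × ℤ} (hp : p ≠ 0) :
    (k : ℚ) • toQ p ∉ interior Q := by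
  have hk' : (k : ℚ)⁻¹ ≠ 0 := inv_ne_zero (Int.cast_ne_zero.2 hk)
  intro hmem
  refine hp (hQ p ?_)
  rwa [interior_smul₀ hk', Set.mem_smul_set_iff_inv_smul_mem₀ hk', inv_inv]

section Order

variable {Q : Set (ℚ × ℚ)} {I : ℤ} (hQ : Convex ℚ Q) (h0 : (0 : ℚ × ℚ) ∈ interior Q)
  (hI : 0 < I) (hNo : NoIntLatticePts Q I)
include hQ h0 hI hNo

lemma le_of_smul_toQ_mem {p : ℤ × ℤ} (hp : p ≠ 0) {t : ℚ} (ht : t • toQ p ∈ Q) : t ≤ I := by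
  by_contra! hlt
  have hI' : (0 : ℚ) < I := by exact_mod_cast hI
  have ht0 : 0 < t := hI'.trans hlt
  apply hNo.smul_toQ_not_mem_interior hI.ne' hp
  have hscale : (I / t : ℚ) • t • toQ p = (I : ℚ) • toQ p := by
    rw [smul_smul, div_mul_cancel₀ _ ht0.ne']
  rw [← hscale]
  exact hQ.smul_mem_interior_of_lt_one h0 ht (div_nonneg hI'.le ht0.le) ((div_lt_one ht0).2 hlt)

lemma abs_le_of_mk_zero_mem {x : ℚ} (hx : (x, 0) ∈ Q) : |x| ≤ I := by
  have hneg : (-x) • toQ (-1, 0) = (x, 0) := by simp [toQ]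
  have hpos : x • toQ (1, 0) = (x, 0) := by simp [toQ]
  rw [abs_le]
  constructor
  · linarith [le_of_smul_toQ_mem hQ h0 hI hNo (by simp) (hneg ▸ hx)]
  · exact le_of_smul_toQ_mem hQ h0 hI hNo (by simp) (hpos ▸ hx)

lemma le_of_mk_mem_of_mk_mem {a b l : ℤ} (hl : 0 < l) (ha : toQ (a, l) ∈ Q)
    (hb : toQ (b, l) ∈ Q) (hab : l ≤ b - a) : l ≤ I := by
  have hl' : (0 : ℚ) < l := by exact_mod_cast hl
  have hab' : (l : ℚ) ≤ b - a := by exact_mod_cast hab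
  -- a multiple of `l` in `[a, b]` gives the point `l • (m, 1)` of the facet
  set m := ⌈(a : ℚ) / l⌉
  have hm1 : (a : ℚ) ≤ m * l := (div_le_iff₀ hl').1 (Int.le_ceil _)
  have hm2 : (m : ℚ) * l ≤ b := by
    have := (lt_div_iff₀ hl').1 (by linarith [Int.ceil_lt_add_one ((a : ℚ) / l)] :
      (m : ℚ) - 1 < a / l)
    linarith
  have hmem : (l : ℚ) • toQ (m, 1) ∈ Q := by
    have : (l : ℚ) • toQ (m, 1) = ((m : ℚ) * l, (l : ℚ)) := by
      ext <;> simp [toQ, mul_comm]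
    rw [this]
    exact hQ.mk_mem_of_le_of_le ha hb hm1 hm2
  exact_mod_cast le_of_smul_toQ_mem hQ h0 hI hNo (by simp) hmem

end Order

section Facet

variable {Q : Set (ℚ × ℚ)} {r l a b : ℚ} (hQ : Convex ℚ Q) (hax : ∀ x : ℚ, (x, 0) ∈ Q → |x| ≤ r)
  (hl : 0 < l) (ha : (a, l) ∈ Q) (hb : (b, l) ∈ Q)
include hQ hax hl ha hb

lemma neg_one_le_snd_of_mem (hr : 0 < r) (hab : 2 * r * (l + 1) ≤ b - a) {q : ℚ × ℚ}
    (hq : q ∈ Q) : -1 ≤ q.2 := by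
  by_contra! hq2
  have hbq := abs_le.1 (hQ.abs_mul_sub_mul_le hax hb hq hl.le (by linarith))
  have haq := abs_le.1 (hQ.abs_mul_sub_mul_le hax ha hq hl.le (by linarith))
  simp only at hbq haq
  have hwidth : -q.2 * (b - a) ≤ 2 * r * (l - q.2) := by linarith
  have : 2 * r * (l + 1) * -q.2 ≤ -q.2 * (b - a) := by nlinarith
  nlinarith [mul_pos (mul_pos hr hl) (by linarith : (0 : ℚ) < -1 - q.2)]

lemma eq_of_mk_neg_one_mem (hab : 2 * r * (l + 1) ≤ b - a) {c : ℚ} (hc : (c, -1) ∈ Q) :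
    l * c + b = r * (l + 1) ∧ l * c + a = -(r * (l + 1)) := by
  have hbc := abs_le.1 (hQ.abs_mul_sub_mul_le hax hb hc hl.le (by norm_num))
  have hac := abs_le.1 (hQ.abs_mul_sub_mul_le hax ha hc hl.le (by norm_num))
  simp only at hbc hac
  constructor <;> linarith

lemma abs_add_mul_le {c : ℚ} (hc : (c, -1) ∈ Q) (hbc : l * c + b = r * (l + 1))
    (hac : l * c + a = -(r * (l + 1))) {q : ℚ × ℚ} (hq : q ∈ Q) :
    |q.1 + c * q.2| ≤ r * (q.2 + 1) := by
  rcases le_or_gt 0 q.2 with hq2 | hq2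
  · have := hQ.abs_mul_sub_mul_le hax hq hc hq2 (by norm_num)
    simp only at this
    convert this using 2 <;> ring
  · have hbq := abs_le.1 (hQ.abs_mul_sub_mul_le hax hb hq hl.le hq2.le)
    have haq := abs_le.1 (hQ.abs_mul_sub_mul_le hax ha hq hl.le hq2.le)
    simp only at hbq haq
    rw [← mul_le_mul_iff_of_pos_left hl, ← abs_of_pos hl, ← abs_mul, abs_of_pos hl, abs_le]
    constructor <;> nlinarith

end Facet

lemma mk_mem_convexHull_of_abs_le {r h x y : ℚ} (hr : 0 < r) (hh : -1 < h) (hy : y ≤ h)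
    (hx : |x| ≤ r * (y + 1)) :
    (x, y) ∈ convexHull ℚ {(-(r * (h + 1)), h), (r * (h + 1), h), ((0 : ℚ), (-1 : ℚ))} := by
  set T : Set (ℚ × ℚ) := {(-(r * (h + 1)), h), (r * (h + 1), h), (0, -1)}
  obtain ⟨hx1, hx2⟩ := abs_le.1 hx
  have hh1 : 0 < h + 1 := by linarith
  have hd : 0 < 2 * r * (h + 1) := by positivity
  -- barycentric coordinates of `(x, y)`
  have hmem := (convex_convexHull ℚ T).sum_mem (t := Finset.univ)
    (w := ![(r * (y + 1) - x) / (2 * r * (h + 1)), (r * (y + 1) + x) / (2 * r * (h + 1)),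
      (h - y) / (h + 1)])
    (z := ![(-(r * (h + 1)), h), (r * (h + 1), h), (0, -1)])
    (by
      intro i _
      fin_cases i <;> simp only [Fin.zero_eta, Fin.mk_one, Fin.reduceFinMk, Matrix.cons_val]
        <;> apply div_nonneg <;> linarith)
    (by simp only [Fin.sum_univ_three, Matrix.cons_val]; field_simp; ring)
    (by
      intro i _
      apply subset_convexHull
      fin_cases i <;> simp [T])
  convert hmem using 1
  simp only [Fin.sum_univ_three, Matrix.cons_val]
  ext <;> simp only [Prod.fst_add, Prod.snd_add, Prod.smul_fst, Prod.smul_snd, smul_eq_mul]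
    <;> field_simp <;> ring

theorem shear_image_eq_triangle {Q : Set (ℚ × ℚ)} {S : Set (ℤ × ℤ)} {I l : ℤ}
    (hS : Q = convexHull ℚ (toQ '' S)) (h0 : (0 : ℚ × ℚ) ∈ interior Q) (hI : 0 < I)
    (hNo : NoIntLatticePts Q I) (hl : 0 < l) (htop : ∀ y ∈ Q, y.2 ≤ l)
    (hcount : (latticeCount {x ∈ Q | x.2 = l} : ℤ) = 2 * I * (l + 1) + 1) :
    l ≤ I ∧ ∃ c : ℤ, intMat ℚ 1 c 0 1 '' Q =
      convexHull ℚ {toQ (-(I * (l + 1)), l), toQ (I * (l + 1), l), toQ (0, -1)} := by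
  have hQ : Convex ℚ Q := hS ▸ convex_convexHull ℚ _
  have hax : ∀ x : ℚ, (x, 0) ∈ Q → |x| ≤ I := fun x => abs_le_of_mk_zero_mem hQ h0 hI hNo
  have hI' : (0 : ℚ) < I := by exact_mod_cast hI
  have hl' : (0 : ℚ) < l := by exact_mod_cast hl
  obtain ⟨a, b, ha, hb, hab⟩ := exists_mk_mem_of_latticeCount hcount (by positivity)
  have hab' : 2 * (I : ℚ) * (l + 1) ≤ b - a := by
    exact_mod_cast (by linarith : 2 * I * (l + 1) ≤ b - a)
  refine ⟨le_of_mk_mem_of_mk_mem hQ h0 hI hNo hl ha hb (by nlinarith), ?_⟩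
  obtain ⟨c, hc⟩ := exists_mk_neg_one_mem_of_convexHull hS h0
    fun q => neg_one_le_snd_of_mem hQ hax hl' ha hb hI' hab'
  obtain ⟨hbc, hac⟩ := eq_of_mk_neg_one_mem hQ hax hl' ha hb hab' hc
  have htri : convexHull ℚ {toQ (-(I * (l + 1)), l), toQ (I * (l + 1), l), toQ (0, -1)} =
      convexHull ℚ {(-((I : ℚ) * (l + 1)), (l : ℚ)), ((I : ℚ) * (l + 1), (l : ℚ)),
        ((0 : ℚ), (-1 : ℚ))} := by
    simp [toQ]
  refine ⟨c, subset_antisymm ?_ ?_⟩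
  · rintro _ ⟨q, hq, rfl⟩
    rw [htri]
    simpa using mk_mem_convexHull_of_abs_le hI' (by linarith) (htop q hq)
      (abs_add_mul_le hQ hax hl' ha hb hc hbc hac hq)
  · refine convexHull_min ?_ (hQ.linear_image _)
    have hac' : a + c * l = -(I * (l + 1)) := by
      exact_mod_cast (by linarith : (a : ℚ) + c * l = -(I * (l + 1)))
    have hbc' : b + c * l = I * (l + 1) := by
      exact_mod_cast (by linarith : (b : ℚ) + c * l = I * (l + 1))
    rintro _ (rfl | rfl | rfl)
    · exact ⟨_, ha, by simp [toQ, ← hac']⟩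
    · exact ⟨_, hb, by simp [toQ, ← hbc']⟩
    · exact ⟨_, hc, by simp [toQ]⟩

/-- Equality case: if `Q` is an IP-polygon of order `I` with a facet `F` of local
index `l` satisfying `|F ∩ ℤ²| = 2I(l + 1) + 1`, then `l ≤ I` and `Q` is unimodularly
equivalent to the triangle with vertices `(−I(l+1), l)`, `(I(l+1), l)`, `(0, −1)`. -/
theorem facet_lattice_points_equality_case
    (Q : Set (ℚ × ℚ)) (F : Set (ℚ × ℚ)) (η : ℤ × ℤ) (I l : ℤ)
    (hQ : IsIPPolygon Q) (hI : HasOrder Q I) (hF : IsFacetWith Q η l F)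
    (heq : (latticeCount F : ℤ) = 2 * I * (l + 1) + 1) :
    l ≤ I ∧ UnimodEquiv Q (convexHull ℚ
      {toQ (-(I * (l + 1)), l), toQ (I * (l + 1), l), toQ (0, -1)}) := by
  obtain ⟨⟨⟨S, hS⟩, -⟩, h0⟩ := hQ
  obtain ⟨hI1, hNo, -⟩ := hI
  obtain ⟨hprim, hl, htop, rfl, -⟩ := hF
  -- Bezout gives a unimodular change of coordinates whose second coordinate is `⟨η, ·⟩`
  obtain ⟨u, v, huv⟩ := Int.isCoprime_iff_gcd_eq_one.mpr hprim
  have hdet : v * η.2 - -u * η.1 = 1 := by linear_combination huv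
  set e := intMat ℚ v (-u) η.1 η.2
  have hfacet : {x ∈ e '' Q | x.2 = l} = e '' {x ∈ Q | pairQ η x = l} := by
    ext y
    constructor
    · rintro ⟨⟨x, hx, rfl⟩, hxl⟩
      exact ⟨x, ⟨hx, hxl⟩, rfl⟩
    · rintro ⟨x, ⟨hx, hxl⟩, rfl⟩
      exact ⟨⟨x, hx, rfl⟩, hxl⟩
  obtain ⟨hlI, c, hc⟩ := shear_image_eq_triangle (Q := e '' Q)
    (S := intMat ℤ v (-u) η.1 η.2 '' S)
    (by rw [hS, LinearMap.image_convexHull, Set.image_image, Set.image_image]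
        exact congrArg _ (Set.image_congr fun p _ => intMat_toQ p))
    (by rw [interior_intMat_image hdet]; exact ⟨0, h0, map_zero e⟩)
    (by omega) (hNo.intMat_image hdet) hl
    (by rintro _ ⟨x, hx, rfl⟩; exact htop x hx)
    (by rw [hfacet, latticeCount_intMat_image hdet, heq])
  exact ⟨hlI, (unimodEquiv_intMat_image hdet Q).trans
    (hc ▸ unimodEquiv_intMat_image (by ring) _)⟩
end

section
/- Let Q be a centrally symmetric IP-polygon (i.e. Q = −Q) of order o_Q = I. Then Vol(Q) ≤ 8I², where Vol denotes the normalized volume (twice the Euclidean area). -/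
open Pointwise

/-!
If `Vol(Q) > 8I²`, the real closure `K` of `Q` has area `> 4I²`, so for a rational `c < 1` close
enough to `1` the convex symmetric body `(c/I)·K` still has area `> 4`. Minkowski's theorem gives
a nonzero lattice point in it, and since `c < 1` that point lies in the interior of `(1/I)·Q`,
contradicting `o_Q = I`.
-/

open MeasureTheory

theorem exists_ne_zero_int_mem_of_four_lt_volume {s : Set (ℝ × ℝ)}
    (h_symm : ∀ x ∈ s, -x ∈ s) (h_conv : Convex ℝ s) (h : 4 < volume s) :
    ∃ p : ℤ × ℤ, p ≠ 0 ∧ ((p.1 : ℝ), (p.2 : ℝ)) ∈ s := by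
  let b := Module.Basis.finTwoProd ℝ
  have : Countable (Submodule.span ℤ (Set.range b)).toAddSubgroup :=
    inferInstanceAs (Countable (Submodule.span ℤ (Set.range b)))
  have h_fund : volume (ZSpan.fundamentalDomain b) = 1 := by
    have : ZSpan.fundamentalDomain b = Set.Ico (0 : ℝ) 1 ×ˢ Set.Ico (0 : ℝ) 1 := by
      ext; simp [b, ZSpan.mem_fundamentalDomain, Fin.forall_fin_two]
    simp [this, Measure.volume_eq_prod]
  obtain ⟨⟨x, hx⟩, hx0, hxs⟩ := exists_ne_zero_mem_lattice_of_measure_mul_two_pow_lt_measure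
    (ZSpan.isAddFundamentalDomain' b volume) h_symm h_conv (by norm_num [h_fund, h])
  rw [Submodule.mem_toAddSubgroup, b.mem_span_iff_repr_mem ℤ] at hx
  obtain ⟨m, hm⟩ := hx 0
  obtain ⟨n, hn⟩ := hx 1
  have hxmn : x = ((m : ℝ), (n : ℝ)) := by simp_all [b]
  refine ⟨(m, n), ?_, hxmn ▸ hxs⟩
  rintro ⟨⟩
  exact hx0 (Subtype.ext (by simpa [Prod.ext_iff] using hxmn))

theorem four_lt_volume_smul {K : Set (ℝ × ℝ)} {t : ℝ} (ht : 0 ≤ t)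
    (h : 4 < t ^ 2 * (volume K).toReal) : 4 < volume (t • K) := by
  have hK : volume K ≠ ⊤ := fun hK => by norm_num [hK] at h
  rw [Measure.addHaar_smul_of_nonneg volume ht, Module.finrank_prod, Module.finrank_self,
    ← ENNReal.ofReal_toReal hK, ← ENNReal.ofReal_mul (sq_nonneg t)]
  exact (ENNReal.lt_ofReal_iff_toReal_lt (by norm_num)).2 (by simpa using h)

theorem convex_closure_of_forall_rat_combo_mem {E : Type*} [AddCommGroup E] [Module ℝ E]
    [TopologicalSpace E] [IsTopologicalAddGroup E] [ContinuousSMul ℝ E] {s : Set E}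
    (h : ∀ x ∈ s, ∀ y ∈ s, ∀ θ : ℚ, 0 ≤ θ → θ ≤ 1 → (θ : ℝ) • x + (1 - (θ : ℝ)) • y ∈ s) :
    Convex ℝ (closure s) := by
  intro x hx y hy a b ha hb hab
  obtain rfl : b = 1 - a := by linarith
  let T := {θ : ℝ | θ • x + (1 - θ) • y ∈ closure s}
  have hT : IsClosed T := isClosed_closure.preimage (by fun_prop)
  have h_rat : ∀ θ : ℚ, 0 ≤ θ → θ ≤ 1 → (θ : ℝ) ∈ T := fun θ h0 h1 => by
    let f : E × E → E := fun p => (θ : ℝ) • p.1 + (1 - (θ : ℝ)) • p.2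
    have hmaps : Set.MapsTo f (s ×ˢ s) s := fun p hp => h p.1 hp.1 p.2 hp.2 θ h0 h1
    exact hmaps.closure (by fun_prop : Continuous f)
      (show (x, y) ∈ closure (s ×ˢ s) by rw [closure_prod_eq]; exact ⟨hx, hy⟩)
  have h_Icc : Set.Icc (0 : ℝ) 1 ⊆ T :=
    calc Set.Icc (0 : ℝ) 1 = closure (Set.Ioo 0 1) := (closure_Ioo zero_ne_one).symm
      _ ⊆ closure (Set.Ioo 0 1 ∩ Set.range ((↑) : ℚ → ℝ)) :=
        closure_minimal (Rat.denseRange_cast.open_subset_closure_inter isOpen_Ioo) isClosed_closure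
      _ ⊆ T := closure_minimal (by
          rintro _ ⟨⟨h0, h1⟩, θ, rfl⟩
          exact h_rat θ (by exact_mod_cast h0.le) (by exact_mod_cast h1.le)) hT
  exact h_Icc ⟨ha, by linarith⟩

theorem Convex.smul_closure_subset_interior {𝕜 E : Type*} [Field 𝕜] [LinearOrder 𝕜]
    [IsStrictOrderedRing 𝕜] [AddCommGroup E] [Module 𝕜 E] [TopologicalSpace E]
    [IsTopologicalAddGroup E] [ContinuousConstSMul 𝕜 E] {s : Set E} (hs : Convex 𝕜 s)
    (h0 : 0 ∈ interior s) {c : 𝕜} (hc0 : 0 ≤ c) (hc1 : c < 1) : c • closure s ⊆ interior s := by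
  rintro _ ⟨x, hx, rfl⟩
  simpa using hs.combo_closure_interior_mem_interior hx h0 hc0 (sub_pos.2 hc1) (add_sub_cancel c 1)

theorem exists_rat_pos_lt_one_lt_sq_mul {a b : ℝ} (hb : 0 < b) (hab : a < b) :
    ∃ c : ℚ, 0 < c ∧ c < 1 ∧ a < (c : ℝ) ^ 2 * b := by
  have h : √(max (a / b) 0) < 1 :=
    (Real.sqrt_lt' one_pos).2 (by simpa using max_lt ((div_lt_one hb).2 hab) one_pos)
  obtain ⟨c, hc, hc1⟩ := exists_rat_btwn h
  have hc0 : (0 : ℝ) < c := (Real.sqrt_nonneg _).trans_lt hc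
  exact ⟨c, by exact_mod_cast hc0, by exact_mod_cast hc1,
    (div_lt_iff₀ hb).1 ((le_max_left _ 0).trans_lt ((Real.sqrt_lt' hc0).1 hc))⟩

/-- `nVol Q = 2 * (volume (closure (ratToReal '' Q))).toReal` holds by `rfl`. -/
def ratToReal (x : ℚ × ℚ) : ℝ × ℝ := ((x.1 : ℝ), (x.2 : ℝ))

theorem isometry_ratToReal : Isometry ratToReal :=
  Isometry.of_dist_eq fun u v => by simp only [ratToReal, Prod.dist_eq, Rat.dist_cast]

theorem ratToReal_add (x y : ℚ × ℚ) : ratToReal (x + y) = ratToReal x + ratToReal y := by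
  simp [ratToReal]

theorem ratToReal_smul (q : ℚ) (x : ℚ × ℚ) : ratToReal (q • x) = (q : ℝ) • ratToReal x := by
  simp [ratToReal]

theorem ratToReal_neg (x : ℚ × ℚ) : ratToReal (-x) = -ratToReal x := by
  simp [ratToReal]

theorem ratToReal_toQ (p : ℤ × ℤ) : ratToReal (toQ p) = ((p.1 : ℝ), (p.2 : ℝ)) := by
  simp [ratToReal, toQ]

theorem Convex.convex_closure_image_ratToReal {A : Set (ℚ × ℚ)} (hA : Convex ℚ A) :
    Convex ℝ (closure (ratToReal '' A)) := by
  refine convex_closure_of_forall_rat_combo_mem ?_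
  rintro _ ⟨x, hx, rfl⟩ _ ⟨y, hy, rfl⟩ θ h0 h1
  exact ⟨θ • x + (1 - θ) • y, hA hx hy h0 (sub_nonneg.2 h1) (add_sub_cancel θ 1), by
    rw [ratToReal_add, ratToReal_smul, ratToReal_smul]; push_cast; rfl⟩

theorem neg_mem_closure_image_ratToReal {A : Set (ℚ × ℚ)} (hA : ∀ x ∈ A, -x ∈ A) :
    ∀ z ∈ closure (ratToReal '' A), -z ∈ closure (ratToReal '' A) := by
  have hmaps : Set.MapsTo Neg.neg (ratToReal '' A) (ratToReal '' A) := by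
    rintro _ ⟨x, hx, rfl⟩
    exact ⟨-x, hA x hx, ratToReal_neg x⟩
  exact fun z hz => hmaps.closure continuous_neg hz

theorem closure_image_ratToReal_smul (q : ℚ) (A : Set (ℚ × ℚ)) :
    closure (ratToReal '' (q • A)) = (q : ℝ) • closure (ratToReal '' A) := by
  rw [← closure_smul₀, ← Set.image_smul, ← Set.image_smul, Set.image_image, Set.image_image]
  simp only [ratToReal_smul]

theorem exists_ne_zero_toQ_mem_smul_closure {A : Set (ℚ × ℚ)} (h_symm : ∀ x ∈ A, -x ∈ A)
    (h_conv : Convex ℚ A) {t : ℚ} (ht : 0 ≤ t)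
    (h : 4 < (t : ℝ) ^ 2 * (volume (closure (ratToReal '' A))).toReal) :
    ∃ p : ℤ × ℤ, p ≠ 0 ∧ toQ p ∈ t • closure A := by
  have h_symm_smul : ∀ x ∈ t • A, -x ∈ t • A := by
    rintro _ ⟨x, hx, rfl⟩
    exact ⟨-x, h_symm x hx, smul_neg t x⟩
  obtain ⟨p, hp0, hp⟩ := exists_ne_zero_int_mem_of_four_lt_volume
    (neg_mem_closure_image_ratToReal h_symm_smul) (h_conv.smul t).convex_closure_image_ratToReal
    (by rw [closure_image_ratToReal_smul]; exact four_lt_volume_smul (by exact_mod_cast ht) h)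
  refine ⟨p, hp0, ?_⟩
  rw [← closure_smul₀, isometry_ratToReal.isEmbedding.closure_eq_preimage_closure_image,
    Set.mem_preimage, ratToReal_toQ]
  exact hp

/-- Minkowski bound: a centrally symmetric IP-polygon of order `I` satisfies
`Vol(Q) ≤ 8I²`. -/
theorem centrally_symmetric_volume_bound
    (Q : Set (ℚ × ℚ)) (I : ℤ) (hQ : IsIPPolygon Q) (hsym : Q = -Q)
    (hI : HasOrder Q I) :
    nVol Q ≤ 8 * (I : ℝ) ^ 2 := by
  obtain ⟨⟨⟨_, hQS⟩, -⟩, h0⟩ := hQ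
  obtain ⟨hI1, hI_no_pts, -⟩ := hI
  have hQ_conv : Convex ℚ Q := hQS ▸ convex_convexHull ℚ _
  have hQ_symm : ∀ x ∈ Q, -x ∈ Q := fun x hx => by rw [hsym]; exact Set.neg_mem_neg.2 hx
  have hI0 : (0 : ℚ) < I := by exact_mod_cast hI1
  by_contra! hvol
  set V := (volume (closure (ratToReal '' Q))).toReal
  have hV : 4 * (I : ℝ) ^ 2 < V := by
    change 8 * (I : ℝ) ^ 2 < 2 * V at hvol
    linarith
  obtain ⟨c, hc0, hc1, hc⟩ := exists_rat_pos_lt_one_lt_sq_mul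
    ((by positivity : (0 : ℝ) ≤ 4 * I ^ 2).trans_lt hV) hV
  obtain ⟨p, hp0, hp⟩ := exists_ne_zero_toQ_mem_smul_closure hQ_symm hQ_conv (t := c / I)
    (by positivity) (by
      push_cast
      rw [div_pow, div_mul_eq_mul_div, lt_div_iff₀ (by positivity)]
      linarith)
  -- Minkowski only gives a point of the closure; the factor `c < 1` pushes it into the interior.
  rw [div_eq_mul_inv, ← smul_smul, ← closure_smul₀] at hp
  have hQ₁ : 0 ∈ interior ((I : ℚ)⁻¹ • Q) := by
    rw [interior_smul₀ (inv_ne_zero hI0.ne')]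
    simpa using Set.smul_mem_smul_set (a := (I : ℚ)⁻¹) h0
  exact hp0 (hI_no_pts p ((hQ_conv.smul _).smul_closure_subset_interior hQ₁ hc0.le hc1 hp))
end

section
/- Let Q be an LDP-polygon and let T be an LDP-sub-triangle of Q, i.e. T is the convex hull of three vertices of Q and contains the origin in its interior. Then T is unimodularly equivalent to a triangle with vertices (1,0), (p,q), and (x,y) satisfying gcd(p,q) = 1, gcd(x,y) = 1, 0 ≤ p < q ≤ Vol(Q) − 2, −q ≤ y < 0, and yp − q ≤ xq < yp. -/
open Pointwise

/-!
Write `T = conv {A, B, C}` with primitive vertices. As `0` is interior to `T`, the determinants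
`det (A, B)`, `det (B, C)`, `det (C, A)` are all positive once `A` and `B` are swapped if necessary,
and a rotation of the vertices makes `q = det (A, B)` the largest of them. A unimodular map sends
the primitive vector `A` to `(1, 0)`, so `B` goes to some `(p, q)`, and after a shear `0 ≤ p < q`.
Then `C` goes to `(x, y)` with `y = -det (C, A)` and `p y - q x = det (B, C)`, so the conditions
`0 < det (C, A) ≤ q` and `0 < det (B, C) ≤ q` are exactly the stated inequalities. Finally
`Vol Q ≥ Vol T = det (A, B) + det (B, C) + det (C, A) ≥ q + 2`.
-/

open MeasureTheory Set Filter Topology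

def det2 {R : Type*} [CommRing R] (u v : R × R) : R := u.1 * v.2 - u.2 * v.1

lemma det2_swap {R : Type*} [CommRing R] (u v : R × R) : det2 v u = -det2 u v := by
  unfold det2; ring

lemma det2_sub_sub {R : Type*} [CommRing R] (u v w : R × R) :
    det2 (v - u) (w - u) = det2 u v + det2 v w + det2 w u := by
  simp only [det2, Prod.fst_sub, Prod.snd_sub]; ring

lemma det2_toQ (u v : ℤ × ℤ) : det2 (toQ u) (toQ v) = det2 u v := by
  simp [det2, toQ]

lemma toQ_sub (u v : ℤ × ℤ) : toQ (u - v) = toQ u - toQ v := by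
  simp [toQ]

lemma toQ_ne_zero_of_gcd_eq_one {u : ℤ × ℤ} (hu : Int.gcd u.1 u.2 = 1) : toQ u ≠ 0 := by
  intro h
  simp only [toQ, Prod.mk_eq_zero, Int.cast_eq_zero] at h
  simp [h.1, h.2] at hu

section HalfPlane

variable {K : Type*} [Field K] [LinearOrder K] [IsStrictOrderedRing K] [TopologicalSpace K]
  [OrderTopology K]

lemma zero_notMem_interior_convexHull_of_det2_nonneg {s : Set (K × K)} {w : K × K}
    (hw : w ≠ 0) (hs : ∀ z ∈ s, 0 ≤ det2 z w) : (0 : K × K) ∉ interior (convexHull K s) := by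
  intro h0
  have hconv : Convex K {z : K × K | 0 ≤ det2 z w} :=
    convex_halfSpace_ge ⟨fun x y => by simp only [det2, Prod.fst_add, Prod.snd_add]; ring,
      fun c x => by simp only [det2, Prod.smul_fst, Prod.smul_snd, smul_eq_mul]; ring⟩ 0
  have hhull : convexHull K s ⊆ {z | 0 ≤ det2 z w} := convexHull_min hs hconv
  set v : K × K := (-w.2, w.1)
  have hv : det2 v w < 0 := by
    have hw' : w.1 ≠ 0 ∨ w.2 ≠ 0 := by
      by_contra! h
      exact hw (Prod.ext h.1 h.2)
    simp only [det2, v]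
    rcases hw' with h | h <;> nlinarith [sq_pos_of_ne_zero h, sq_nonneg w.1, sq_nonneg w.2]
  have hnear : ∀ᶠ t in 𝓝[>] (0 : K), t • v ∈ convexHull K s :=
    (tendsto_nhdsWithin_of_tendsto_nhds ((continuous_id.smul continuous_const).tendsto' 0 0
      (zero_smul K v))).eventually (mem_interior_iff_mem_nhds.mp h0)
  obtain ⟨t, hts, ht⟩ := (hnear.and self_mem_nhdsWithin).exists
  have hdet : det2 (t • v) w = t * det2 v w := by
    simp only [det2, Prod.smul_fst, Prod.smul_snd, smul_eq_mul]; ring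
  have := hhull hts
  simp only [mem_ofPred_eq, hdet] at this
  nlinarith [mem_Ioi.mp ht]

lemma det2_mul_det2_pos_of_zero_mem_interior {A B C : K × K} (hB : B ≠ 0)
    (h0 : (0 : K × K) ∈ interior (convexHull K {A, B, C})) : 0 < det2 A B * det2 B C := by
  by_contra! hle
  rcases mul_nonpos_iff.mp hle with ⟨hAB, hBC⟩ | ⟨hAB, hBC⟩
  · refine zero_notMem_interior_convexHull_of_det2_nonneg hB ?_ h0
    rintro z (rfl | rfl | rfl) <;> simp only [det2] at * <;> linarith
  · refine zero_notMem_interior_convexHull_of_det2_nonneg (neg_ne_zero.mpr hB) ?_ h0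
    rintro z (rfl | rfl | rfl) <;> simp only [det2, Prod.fst_neg, Prod.snd_neg] at * <;> linarith

lemma det2_pos_or_det2_pos_of_zero_mem_interior {A B C : K × K} (hB : B ≠ 0) (hC : C ≠ 0)
    (h0 : (0 : K × K) ∈ interior (convexHull K {A, B, C})) :
    (0 < det2 A B ∧ 0 < det2 B C ∧ 0 < det2 C A) ∨
      (0 < det2 B A ∧ 0 < det2 A C ∧ 0 < det2 C B) := by
  have hABC := det2_mul_det2_pos_of_zero_mem_interior hB h0
  have hBCA := det2_mul_det2_pos_of_zero_mem_interior (A := B) (C := A) hC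
    (by rwa [pair_comm, insert_comm])
  rw [det2_swap A B, det2_swap B C, det2_swap C A]
  rcases pos_and_pos_or_neg_and_neg_of_mul_pos hABC with ⟨hAB, hBC⟩ | ⟨hAB, hBC⟩
  · exact Or.inl ⟨hAB, hBC, pos_of_mul_pos_right hBCA hBC.le⟩
  · exact Or.inr ⟨neg_pos.mpr hAB, neg_pos.mpr (neg_of_mul_pos_right hBCA hBC.le),
      neg_pos.mpr hBC⟩

end HalfPlane

lemma add_add_smul_mem_convexHull {𝕜 E : Type*} [Field 𝕜] [LinearOrder 𝕜]
    [IsStrictOrderedRing 𝕜] [AddCommGroup E] [Module 𝕜 E] (u v w : E) {α β γ : 𝕜}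
    (hα : 0 ≤ α) (hβ : 0 ≤ β) (hγ : 0 ≤ γ) (hsum : α + β + γ = 1) :
    α • u + β • v + γ • w ∈ convexHull 𝕜 {u, v, w} := by
  have h := (convex_convexHull 𝕜 {u, v, w}).sum_mem (t := Finset.univ) (w := ![α, β, γ])
    (z := ![u, v, w]) (fun i _ => by fin_cases i <;> simpa)
    (by simp [Fin.sum_univ_three, hsum])
    (fun i _ => by fin_cases i <;> apply subset_convexHull <;> simp)
  simpa [Fin.sum_univ_three] using h

lemma regionBetween_subset_convexHull :
    regionBetween 0 (fun x => 1 - x) (Icc 0 1) ⊆ convexHull ℝ {(0 : ℝ × ℝ), (1, 0), (0, 1)} := by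
  rintro ⟨x, y⟩ ⟨⟨hx, -⟩, hy, hxy⟩
  simp only [Pi.zero_apply] at hy hxy
  convert add_add_smul_mem_convexHull (0 : ℝ × ℝ) (1, 0) (0, 1) (α := 1 - x - y) (β := x)
    (γ := y) (by linarith) hx hy.le (by ring) using 1
  ext <;> simp

lemma half_le_volume_convexHull_std :
    ENNReal.ofReal (1 / 2) ≤ volume (convexHull ℝ {(0 : ℝ × ℝ), (1, 0), (0, 1)}) := by
  refine le_of_eq_of_le ?_ (measure_mono regionBetween_subset_convexHull)
  rw [Measure.volume_eq_prod, volume_regionBetween_eq_integral (f := 0) (g := fun x => 1 - x)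
    (integrable_zero _ _ _).integrableOn
    (by fun_prop : Continuous fun x : ℝ => 1 - x).integrableOn_Icc
    measurableSet_Icc (fun x hx => sub_nonneg.mpr hx.2), integral_Icc_eq_integral_Ioc,
    ← intervalIntegral.integral_of_le zero_le_one, sub_zero,
    intervalIntegral.integral_sub intervalIntegrable_const intervalIntegral.intervalIntegrable_id]
  norm_num

lemma ofReal_abs_det2_div_two_le_volume (P R S : ℝ × ℝ) :
    ENNReal.ofReal (|det2 (R - P) (S - P)| / 2) ≤ volume (convexHull ℝ {P, R, S}) := by
  set u := R - P
  set v := S - P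
  set L := Matrix.toLin (Module.Basis.finTwoProd ℝ) (Module.Basis.finTwoProd ℝ)
    !![u.1, v.1; u.2, v.2]
  have hdet : LinearMap.det L = det2 u v := by
    rw [LinearMap.det_toLin, Matrix.det_fin_two_of, det2]
    ring
  have himage : {P, R, S} = P +ᵥ L '' {(0 : ℝ × ℝ), (1, 0), (0, 1)} := by
    simp [L, Matrix.toLin_finTwoProd_apply, image_insert_eq, vadd_set_insert, u, v,
      ← Prod.mk_sub_mk, Prod.mk_zero_zero]
  calc ENNReal.ofReal (|det2 u v| / 2)
      = ENNReal.ofReal |LinearMap.det L| * ENNReal.ofReal (1 / 2) := by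
        rw [hdet, ← ENNReal.ofReal_mul (abs_nonneg _), mul_one_div]
    _ ≤ ENNReal.ofReal |LinearMap.det L| *
          volume (convexHull ℝ {(0 : ℝ × ℝ), (1, 0), (0, 1)}) := by
        gcongr; exact half_le_volume_convexHull_std
    _ = volume (convexHull ℝ {P, R, S}) := by
        rw [himage, convexHull_vadd, ← LinearMap.image_convexHull, measure_vadd,
          Measure.addHaar_image_linearMap]

theorem Convex.real_of_rat_of_isClosed {E : Type*} [AddCommGroup E] [Module ℝ E] [Module ℚ E]
    [TopologicalSpace E] [IsTopologicalAddGroup E] [ContinuousSMul ℝ E] {s : Set E}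
    (hs : Convex ℚ s) (hc : IsClosed s) : Convex ℝ s := by
  refine convex_iff_segment_subset.mpr fun x hx y hy => ?_
  have hrat : ((↑) : ℚ → ℝ) '' Icc 0 1 ⊆ AffineMap.lineMap x y ⁻¹' s := by
    rintro _ ⟨t, ⟨ht0, ht1⟩, rfl⟩
    have := hs hx hy (sub_nonneg.mpr ht1) ht0 (sub_add_cancel 1 t)
    rw [← Rat.cast_smul_eq_qsmul ℝ, ← Rat.cast_smul_eq_qsmul ℝ, Rat.cast_sub, Rat.cast_one]
      at this
    simpa [AffineMap.lineMap_apply_module] using this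
  have hdense : Icc (0 : ℝ) 1 ⊆ closure (((↑) : ℚ → ℝ) '' Icc 0 1) := by
    rw [← closure_Ioo zero_ne_one]
    refine closure_minimal ((Rat.denseRange_cast.open_subset_closure_inter isOpen_Ioo).trans
      (closure_mono ?_)) isClosed_closure
    rintro _ ⟨⟨h0, h1⟩, t, rfl⟩
    exact ⟨t, ⟨by exact_mod_cast h0.le, by exact_mod_cast h1.le⟩, rfl⟩
  rw [segment_eq_image_lineMap]
  rintro _ ⟨t, ht, rfl⟩
  exact closure_minimal hrat (hc.preimage AffineMap.lineMap_continuous) (hdense ht)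

lemma isLinearMap_ratCast_prod : IsLinearMap ℚ (fun x : ℚ × ℚ => ((x.1 : ℝ), (x.2 : ℝ))) :=
  ⟨fun x y => by ext <;> simp, fun c x => by ext <;> simp [Rat.smul_def]⟩

lemma abs_det2_le_nVol {s : Set (ℚ × ℚ)} (hs : s.Finite) {a b c : ℚ × ℚ}
    (ha : a ∈ convexHull ℚ s) (hb : b ∈ convexHull ℚ s) (hc : c ∈ convexHull ℚ s) :
    |((det2 (b - a) (c - a) : ℚ) : ℝ)| ≤ nVol (convexHull ℚ s) := by
  set ι := fun x : ℚ × ℚ => ((x.1 : ℝ), (x.2 : ℝ))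
  set K := closure (ι '' convexHull ℚ s)
  have hK : Convex ℝ K := Convex.real_of_rat_of_isClosed
    ((convex_convexHull ℚ s).is_linear_image isLinearMap_ratCast_prod).closure isClosed_closure
  have htri : convexHull ℝ {ι a, ι b, ι c} ⊆ K := by
    refine convexHull_min ?_ hK
    rintro _ (rfl | rfl | rfl) <;> exact subset_closure (mem_image_of_mem ι ‹_›)
  have hKfin : volume K ≠ ⊤ := by
    have hcpt := (hs.image ι).isCompact_convexHull ℝ
    refine ne_top_of_le_ne_top hcpt.measure_lt_top.ne
      (measure_mono (closure_minimal ?_ hcpt.isClosed))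
    rw [isLinearMap_ratCast_prod.image_convexHull]
    exact convexHull_min (subset_convexHull ℝ _) ((convex_convexHull ℝ _).lift ℚ)
  have hdet : ((det2 (b - a) (c - a) : ℚ) : ℝ) = det2 (ι b - ι a) (ι c - ι a) := by
    simp [ι, det2]
  have := (ENNReal.ofReal_le_iff_le_toReal hKfin).mp
    ((ofReal_abs_det2_div_two_le_volume _ _ _).trans (measure_mono htri))
  rw [nVol, hdet]
  linarith

def linMap (a b c d : ℤ) (P : ℤ × ℤ) : ℤ × ℤ := (a * P.1 + b * P.2, c * P.1 + d * P.2)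

section linMap

variable {a b c d : ℤ}

lemma det2_linMap (P R : ℤ × ℤ) :
    det2 (linMap a b c d P) (linMap a b c d R) = (a * d - b * c) * det2 P R := by
  simp only [det2, linMap]; ring

lemma gcd_linMap_eq_one (hdet : a * d - b * c = 1) {P : ℤ × ℤ} (hP : Int.gcd P.1 P.2 = 1) :
    Int.gcd (linMap a b c d P).1 (linMap a b c d P).2 = 1 := by
  obtain ⟨u, v, huv⟩ := Int.isCoprime_iff_gcd_eq_one.mpr hP
  -- invert the matrix: `P = !![d, -b; -c, a] * linMap a b c d P`
  exact Int.isCoprime_iff_gcd_eq_one.mp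
    ⟨u * d - v * c, v * a - u * b, by
      simp only [linMap]; linear_combination (P.1 * u + P.2 * v) * hdet + huv⟩

lemma unimodEquiv_image_linMap (hdet : a * d - b * c = 1) (s : Set (ℤ × ℤ)) :
    UnimodEquiv (convexHull ℚ (toQ '' s)) (convexHull ℚ (toQ '' (linMap a b c d '' s))) := by
  have hlin : IsLinearMap ℚ (fun x : ℚ × ℚ => ((a : ℚ) * x.1 + (b : ℚ) * x.2,
      (c : ℚ) * x.1 + (d : ℚ) * x.2)) :=
    ⟨fun x y => by ext <;> simp <;> ring, fun r x => by ext <;> simp <;> ring⟩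
  refine ⟨a, b, c, d, Or.inl hdet, ?_⟩
  rw [hlin.image_convexHull, image_image, image_image]
  congr 2
  ext P <;> simp [toQ, linMap]

end linMap

lemma exists_linMap_normalize {A B : ℤ × ℤ} (hA : Int.gcd A.1 A.2 = 1) (hAB : 0 < det2 A B) :
    ∃ a b c d : ℤ, a * d - b * c = 1 ∧ linMap a b c d A = (1, 0) ∧
      0 ≤ (linMap a b c d B).1 ∧ (linMap a b c d B).1 < det2 A B := by
  obtain ⟨u, v, huv⟩ := Int.isCoprime_iff_gcd_eq_one.mpr hA
  -- `!![u, v; -A.2, A.1]` sends `A` to `(1, 0)`; a shear by `k` then reduces the image of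
  -- `B` modulo `det2 A B`
  set k := -((u * B.1 + v * B.2) / det2 A B)
  refine ⟨u - k * A.2, v + k * A.1, -A.2, A.1, by linear_combination huv, ?_, ?_⟩
  · simp only [linMap, Prod.mk.injEq]
    exact ⟨by linear_combination huv, by ring⟩
  have hB : (linMap (u - k * A.2) (v + k * A.1) (-A.2) A.1 B).1 =
      (u * B.1 + v * B.2) % det2 A B := by
    simp only [linMap, Int.emod_def, k, det2]; ring
  rw [hB]
  exact ⟨Int.emod_nonneg _ hAB.ne', Int.emod_lt_of_pos _ hAB⟩

lemma exists_normalForm {A B C : ℤ × ℤ} (hA : Int.gcd A.1 A.2 = 1) (hB : Int.gcd B.1 B.2 = 1)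
    (hC : Int.gcd C.1 C.2 = 1) (hBC : 0 < det2 B C) (hCA : 0 < det2 C A)
    (hBC_le : det2 B C ≤ det2 A B) (hCA_le : det2 C A ≤ det2 A B) :
    ∃ p x y : ℤ, Int.gcd p (det2 A B) = 1 ∧ Int.gcd x y = 1 ∧ 0 ≤ p ∧ p < det2 A B ∧
      -det2 A B ≤ y ∧ y < 0 ∧ y * p - det2 A B ≤ x * det2 A B ∧ x * det2 A B < y * p ∧
      UnimodEquiv (convexHull ℚ {toQ A, toQ B, toQ C})
        (convexHull ℚ {toQ (1, 0), toQ (p, det2 A B), toQ (x, y)}) := by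
  obtain ⟨a, b, c, d, hdet, hMA, hp, hpq⟩ := exists_linMap_normalize hA (hBC.trans_le hBC_le)
  have hT := unimodEquiv_image_linMap hdet {A, B, C}
  have hgcdB := gcd_linMap_eq_one hdet hB
  simp only [image_insert_eq, image_singleton, hMA] at hT
  set M := linMap a b c d
  have hdetM (P R : ℤ × ℤ) : det2 (M P) (M R) = det2 P R := by
    rw [det2_linMap, hdet, one_mul]
  have hMB : (M B).2 = det2 A B := by
    simpa [hMA, det2] using hdetM A B
  have hMC : (M C).2 = -det2 C A := by
    have := hdetM C A
    rw [hMA, det2] at this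
    linarith
  have hMBC := hdetM B C
  rw [det2, hMB] at hMBC
  rw [hMB] at hgcdB
  exact ⟨(M B).1, (M C).1, (M C).2, hgcdB, gcd_linMap_eq_one hdet hC, hp, hpq, by linarith,
    by linarith, by linarith, by linarith, by rwa [← hMB, Prod.mk.eta, Prod.mk.eta]⟩

lemma exists_normalForm_of_det2_pos {A B C : ℤ × ℤ} (hA : Int.gcd A.1 A.2 = 1)
    (hB : Int.gcd B.1 B.2 = 1) (hC : Int.gcd C.1 C.2 = 1) (hAB : 0 < det2 A B)
    (hBC : 0 < det2 B C) (hCA : 0 < det2 C A) :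
    ∃ p q x y : ℤ, q + 2 ≤ det2 A B + det2 B C + det2 C A ∧
      Int.gcd p q = 1 ∧ Int.gcd x y = 1 ∧ 0 ≤ p ∧ p < q ∧
      -q ≤ y ∧ y < 0 ∧ y * p - q ≤ x * q ∧ x * q < y * p ∧
      UnimodEquiv (convexHull ℚ {toQ A, toQ B, toQ C})
        (convexHull ℚ {toQ (1, 0), toQ (p, q), toQ (x, y)}) := by
  have hBCA : ({toQ A, toQ B, toQ C} : Set (ℚ × ℚ)) = {toQ B, toQ C, toQ A} := by
    rw [insert_comm, pair_comm]
  have hCAB : ({toQ A, toQ B, toQ C} : Set (ℚ × ℚ)) = {toQ C, toQ A, toQ B} := by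
    rw [pair_comm, insert_comm]
  rcases (by omega : (det2 B C ≤ det2 A B ∧ det2 C A ≤ det2 A B) ∨
      (det2 C A ≤ det2 B C ∧ det2 A B ≤ det2 B C) ∨
      (det2 A B ≤ det2 C A ∧ det2 B C ≤ det2 C A)) with
    ⟨h₁, h₂⟩ | ⟨h₁, h₂⟩ | ⟨h₁, h₂⟩
  · obtain ⟨p, x, y, h⟩ := exists_normalForm hA hB hC hBC hCA h₁ h₂
    exact ⟨p, _, x, y, by omega, h⟩
  · obtain ⟨p, x, y, h⟩ := exists_normalForm hB hC hA hCA hAB h₁ h₂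
    exact ⟨p, _, x, y, by omega, hBCA ▸ h⟩
  · obtain ⟨p, x, y, h⟩ := exists_normalForm hC hA hB hAB hBC h₁ h₂
    exact ⟨p, _, x, y, by omega, hCAB ▸ h⟩

lemma exists_normalForm_of_zero_mem_interior {A B C : ℤ × ℤ} (hA : Int.gcd A.1 A.2 = 1)
    (hB : Int.gcd B.1 B.2 = 1) (hC : Int.gcd C.1 C.2 = 1)
    (h0 : (0 : ℚ × ℚ) ∈ interior (convexHull ℚ {toQ A, toQ B, toQ C})) :
    ∃ p q x y : ℤ, q + 2 ≤ |det2 (B - A) (C - A)| ∧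
      Int.gcd p q = 1 ∧ Int.gcd x y = 1 ∧ 0 ≤ p ∧ p < q ∧
      -q ≤ y ∧ y < 0 ∧ y * p - q ≤ x * q ∧ x * q < y * p ∧
      UnimodEquiv (convexHull ℚ {toQ A, toQ B, toQ C})
        (convexHull ℚ {toQ (1, 0), toQ (p, q), toQ (x, y)}) := by
  rw [det2_sub_sub]
  rcases det2_pos_or_det2_pos_of_zero_mem_interior (toQ_ne_zero_of_gcd_eq_one hB)
    (toQ_ne_zero_of_gcd_eq_one hC) h0 with h | h <;> simp only [det2_toQ, Int.cast_pos] at h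
  · obtain ⟨p, q, x, y, hq, h⟩ := exists_normalForm_of_det2_pos hA hB hC h.1 h.2.1 h.2.2
    exact ⟨p, q, x, y, hq.trans (le_abs_self _), h⟩
  · obtain ⟨p, q, x, y, hq, h⟩ := exists_normalForm_of_det2_pos hB hA hC h.1 h.2.1 h.2.2
    rw [insert_comm]
    refine ⟨p, q, x, y, hq.trans ?_, h⟩
    rw [det2_swap A B, det2_swap B C, det2_swap C A]
    linarith [neg_le_abs (det2 A B + det2 B C + det2 C A)]

/-- Any LDP-sub-triangle `T` of an LDP-polygon `Q` is unimodularly equivalent to a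
triangle with vertices `(1,0)`, `(p,q)`, `(x,y)` satisfying `gcd(p,q) = 1`,
`gcd(x,y) = 1`, `0 ≤ p < q ≤ Vol(Q) − 2`, `−q ≤ y < 0`, and `yp − q ≤ xq < yp`. -/
theorem ldp_sub_triangle_normal_form
    (Q T : Set (ℚ × ℚ)) (hQ : IsLDPPolygon Q)
    (v₁ v₂ v₃ : ℚ × ℚ) (hv₁ : v₁ ∈ vertices Q) (hv₂ : v₂ ∈ vertices Q)
    (hv₃ : v₃ ∈ vertices Q) (hT : T = convexHull ℚ {v₁, v₂, v₃})
    (h0 : (0 : ℚ × ℚ) ∈ interior T) :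
    ∃ p q x y : ℤ,
      Int.gcd p q = 1 ∧ Int.gcd x y = 1 ∧
      0 ≤ p ∧ p < q ∧ (q : ℝ) ≤ nVol Q - 2 ∧
      -q ≤ y ∧ y < 0 ∧ y * p - q ≤ x * q ∧ x * q < y * p ∧
      UnimodEquiv T (convexHull ℚ {toQ (1, 0), toQ (p, q), toQ (x, y)}) := by
  obtain ⟨⟨⟨⟨S, rfl⟩, -⟩, -⟩, hprim⟩ := hQ
  obtain ⟨A, hA, rfl⟩ := hprim v₁ hv₁
  obtain ⟨B, hB, rfl⟩ := hprim v₂ hv₂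
  obtain ⟨C, hC, rfl⟩ := hprim v₃ hv₃
  subst hT
  obtain ⟨p, q, x, y, hq, hpq, hxy, hp, hpq', hy, hy', hx, hx', hequiv⟩ :=
    exists_normalForm_of_zero_mem_interior hA hB hC h0
  have hvol := abs_det2_le_nVol (S.finite_toSet.image toQ) hv₁.1 hv₂.1 hv₃.1
  rw [← toQ_sub, ← toQ_sub, det2_toQ] at hvol
  have hq' : ((q + 2 : ℤ) : ℝ) ≤ |((det2 (B - A) (C - A) : ℤ) : ℝ)| := by exact_mod_cast hq
  refine ⟨p, q, x, y, hpq, hxy, hp, hpq', ?_, hy, hy', hx, hx', hequiv⟩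
  push_cast at hvol hq'
  linarith
end

section
/- Let Q be an LDP-polygon and let F be a special facet of Q (i.e. the sum of all vertices of Q lies in the cone pos(F) = ℝ_{≥0}·F) with local index l_F. Then Q ⊂ {v ∈ ℚ² : −l_F(l_F + 1) ≤ ⟨η_F, v⟩ ≤ l_F}. -/
open Pointwise

/-!
Every vertex `v` of `Q` has integral height `⟨η, v⟩ ≤ l`, and as `F` is special the heights of all
vertices add up to `⟨η, ∑ v⟩ ≥ 0`. No three vertices are collinear, so each height `h ∈ [1, l]` is
taken by at most two vertices and the positive heights add up to at most `2 (1 + ⋯ + l) = l (l + 1)`.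
Hence every vertex of nonpositive height, in particular a vertex minimising `⟨η, ·⟩` on `Q`, has
height at least `-l (l + 1)`. A minimising vertex exists: the lexicographic minimum of
`x ↦ (⟨η, x⟩, ⟨η⊥, x⟩)` over a finite generating set is an extreme point of its convex hull.
-/

open Finset

section LexMin

variable {𝕜 E : Type*} [Field 𝕜] [LinearOrder 𝕜] [IsStrictOrderedRing 𝕜]
  [AddCommGroup E] [Module 𝕜 E] (f g : E →ₗ[𝕜] 𝕜)

lemma eq_of_mem_openSegment_of_le_of_le {x y z : 𝕜} (h : z ∈ openSegment 𝕜 x y)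
    (hx : z ≤ x) (hy : z ≤ y) : x = z := by
  rcases lt_trichotomy x y with hxy | rfl | hxy
  · rw [openSegment_eq_Ioo hxy] at h
    exact absurd h.1 hx.not_gt
  · rw [openSegment_same] at h
    exact h.symm
  · rw [openSegment_symm, openSegment_eq_Ioo hxy] at h
    exact absurd h.1 hy.not_gt

lemma LinearMap.map_mem_openSegment {x y z : E} (h : z ∈ openSegment 𝕜 x y) :
    f z ∈ openSegment 𝕜 (f x) (f y) := by
  rw [← f.coe_toAffineMap, ← image_openSegment]
  exact Set.mem_image_of_mem _ h

lemma convex_setOf_toLex_le (c : 𝕜 × 𝕜) : Convex 𝕜 {x | toLex c ≤ toLex (f x, g x)} := by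
  refine convex_iff_openSegment_subset.2 fun x hx y hy z hz => ?_
  simp only [Set.mem_ofPred_eq, Prod.Lex.toLex_le_toLex'] at *
  have hfz := f.map_mem_openSegment hz
  refine ⟨(convex_Ici c.1).openSegment_subset hx.1 hy.1 hfz, fun hcz => ?_⟩
  rw [hcz] at hx hy
  have hfx := eq_of_mem_openSegment_of_le_of_le hfz hx.1 hy.1
  have hfy := eq_of_mem_openSegment_of_le_of_le (openSegment_symm 𝕜 (f x) (f y) ▸ hfz) hy.1 hx.1
  exact (convex_Ici c.2).openSegment_subset (hx.2 hfx.symm) (hy.2 hfy.symm)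
    (g.map_mem_openSegment hz)

lemma toLex_le_of_mem_convexHull {s : Set E} {c : 𝕜 × 𝕜}
    (hs : ∀ x ∈ s, toLex c ≤ toLex (f x, g x)) {x : E} (hx : x ∈ convexHull 𝕜 s) :
    toLex c ≤ toLex (f x, g x) :=
  convexHull_min hs (convex_setOf_toLex_le f g c) hx

variable {f g} (hfg : Function.Injective fun x => (f x, g x))
include hfg

lemma mem_extremePoints_convexHull_of_toLex_le {s : Set E} {p : E} (hp : p ∈ s)
    (hmin : ∀ x ∈ s, toLex (f p, g p) ≤ toLex (f x, g x)) :
    p ∈ (convexHull 𝕜 s).extremePoints 𝕜 := by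
  refine mem_extremePoints_iff_left.2 ⟨subset_convexHull 𝕜 s hp, fun x hx y hy hpxy => hfg ?_⟩
  obtain ⟨hfx, hgx⟩ := Prod.Lex.toLex_le_toLex'.1 (toLex_le_of_mem_convexHull f g hmin hx)
  obtain ⟨hfy, hgy⟩ := Prod.Lex.toLex_le_toLex'.1 (toLex_le_of_mem_convexHull f g hmin hy)
  have hpyx := openSegment_symm 𝕜 x y ▸ hpxy
  have hfx' := eq_of_mem_openSegment_of_le_of_le (f.map_mem_openSegment hpxy) hfx hfy
  have hfy' := eq_of_mem_openSegment_of_le_of_le (f.map_mem_openSegment hpyx) hfy hfx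
  have hgx' := eq_of_mem_openSegment_of_le_of_le (g.map_mem_openSegment hpxy)
    (hgx hfx'.symm) (hgy hfy'.symm)
  exact Prod.ext hfx' hgx'

lemma exists_mem_extremePoints_convexHull_forall_le {s : Finset E} (hs : s.Nonempty) :
    ∃ p ∈ (convexHull 𝕜 (s : Set E)).extremePoints 𝕜,
      ∀ x ∈ convexHull 𝕜 (s : Set E), f p ≤ f x := by
  obtain ⟨p, hp, hmin⟩ := s.exists_min_image (fun x => toLex (f x, g x)) hs
  exact ⟨p, mem_extremePoints_convexHull_of_toLex_le hfg hp hmin,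
    fun x hx => (Prod.Lex.toLex_le_toLex'.1 (toLex_le_of_mem_convexHull f g hmin hx)).1⟩

lemma mem_openSegment_of_lt_of_lt {x y z : E} (hxy : f x = f y) (hzy : f z = f y)
    (hgxy : g x < g y) (hgyz : g y < g z) : y ∈ openSegment 𝕜 x z := by
  have hd : 0 < g z - g x := by linarith
  refine ⟨(g z - g y) / (g z - g x), (g y - g x) / (g z - g x), div_pos (by linarith) hd,
    div_pos (by linarith) hd, by field_simp; ring, hfg ?_⟩
  simp only [map_add, map_smul, smul_eq_mul, hxy, hzy, Prod.mk.injEq]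
  constructor <;> field_simp <;> ring

lemma card_le_two_of_subset_extremePoints {A : Set E} {T : Finset E}
    (hT : (T : Set E) ⊆ A.extremePoints 𝕜) {c : 𝕜} (hc : ∀ x ∈ T, f x = c) : #T ≤ 2 := by
  classical
  rcases T.eq_empty_or_nonempty with rfl | hne
  · simp
  obtain ⟨p, hp, hpmin⟩ := T.exists_min_image g hne
  obtain ⟨q, hq, hqmax⟩ := T.exists_max_image g hne
  have hg_ne : ∀ x ∈ T, ∀ y ∈ T, x ≠ y → g x ≠ g y := fun x hx y hy hxy hg =>
    hxy (hfg (Prod.ext ((hc x hx).trans (hc y hy).symm) hg))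
  have hsub : T ⊆ {p, q} := by
    intro v hv
    by_contra hvpq
    simp only [mem_insert, mem_singleton, not_or] at hvpq
    have hmid : v ∈ openSegment 𝕜 p q :=
      mem_openSegment_of_lt_of_lt hfg ((hc p hp).trans (hc v hv).symm)
        ((hc q hq).trans (hc v hv).symm)
        ((hpmin v hv).lt_of_ne (hg_ne p hp v hv (Ne.symm hvpq.1)))
        ((hqmax v hv).lt_of_ne (hg_ne v hv q hq hvpq.2))
    exact hvpq.1 ((mem_extremePoints.1 (hT hv)).2 p (extremePoints_subset (hT hp)) q
      (extremePoints_subset (hT hq)) hmid).1.symm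
  exact (card_le_card hsub).trans card_le_two

end LexMin

section Heights

variable {ι : Type*} (s : Finset ι) (H : ι → ℤ) {l : ℤ}

lemma sum_Icc_two_mul (hl : 0 ≤ l) : ∑ h ∈ Icc 1 l, 2 * h = l * (l + 1) := by
  induction l, hl using Int.leInduction with
  | base => simp
  | succ n hn ih =>
    rw [← insert_Icc_right_eq_Icc_add_one (by omega), sum_insert (by simp), ih]
    ring

variable (hl : 0 ≤ l) (hle : ∀ i ∈ s, H i ≤ l) (hfib : ∀ h, #{i ∈ s | H i = h} ≤ 2)
include hl hle hfib

lemma sum_filter_pos_le : ∑ i ∈ s with 0 < H i, H i ≤ l * (l + 1) := by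
  have hmaps : ∀ i ∈ {i ∈ s | 0 < H i}, H i ∈ Icc 1 l := fun i hi => by
    rw [mem_filter] at hi
    exact mem_Icc.2 ⟨hi.2, hle i hi.1⟩
  rw [← sum_Icc_two_mul hl, ← sum_fiberwise_of_maps_to hmaps]
  refine sum_le_sum fun h hh => ?_
  have hcard : #{i ∈ {i ∈ s | 0 < H i} | H i = h} ≤ 2 :=
    (card_le_card (filter_subset_filter _ (filter_subset _ s))).trans (hfib h)
  calc ∑ i ∈ {i ∈ s | 0 < H i} with H i = h, H i
      ≤ #{i ∈ {i ∈ s | 0 < H i} | H i = h} • h :=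
        sum_le_card_nsmul _ _ _ fun i hi => (mem_filter.1 hi).2.le
    _ ≤ 2 * h := by
        rw [nsmul_eq_mul]
        exact mul_le_mul_of_nonneg_right (by exact_mod_cast hcard) (by linarith [mem_Icc.1 hh])

lemma neg_mul_add_one_le_of_sum_nonneg (hsum : 0 ≤ ∑ i ∈ s, H i) {j : ι} (hj : j ∈ s) :
    -(l * (l + 1)) ≤ H j := by
  classical
  rcases lt_or_ge 0 (H j) with hpos | hnpos
  · nlinarith
  have hj' : j ∈ {i ∈ s | ¬ 0 < H i} := mem_filter.2 ⟨hj, hnpos.not_gt⟩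
  have hrest : ∑ i ∈ s with ¬ 0 < H i, H i ≤ H j := by
    rw [← add_sum_erase _ _ hj']
    refine add_le_of_nonpos_right (sum_nonpos fun i hi => ?_)
    exact not_lt.1 (mem_filter.1 (mem_of_mem_erase hi)).2
  linarith [sum_filter_add_sum_filter_not s (0 < H ·) H, sum_filter_pos_le s H hl hle hfib]

end Heights

def pairL (η : ℤ × ℤ) : (ℚ × ℚ) →ₗ[ℚ] ℚ :=
  (η.1 : ℚ) • LinearMap.fst ℚ ℚ ℚ + (η.2 : ℚ) • LinearMap.snd ℚ ℚ ℚ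

@[simp]
lemma pairL_apply (η : ℤ × ℤ) (x : ℚ × ℚ) : pairL η x = pairQ η x := rfl

lemma cast_num_pairQ_toQ (η p : ℤ × ℤ) : ((pairQ η (toQ p)).num : ℚ) = pairQ η (toQ p) := by
  have : pairQ η (toQ p) = ((η.1 * p.1 + η.2 * p.2 : ℤ) : ℚ) := by simp [pairQ, toQ]
  rw [this, Rat.num_intCast]

lemma pairL_prod_injective {η : ℤ × ℤ} (hη : Int.gcd η.1 η.2 = 1) :
    Function.Injective fun x => (pairL η x, pairL (-η.2, η.1) x) := by
  intro x y h
  simp only [pairL_apply, pairQ, Prod.mk.injEq, Int.cast_neg] at h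
  have hpos : (0 : ℚ) < (η.1 : ℚ) ^ 2 + (η.2 : ℚ) ^ 2 := by
    have : η.1 ≠ 0 ∨ η.2 ≠ 0 := by
      by_contra! h0
      simp [h0.1, h0.2] at hη
    rcases this with h0 | h0
    · nlinarith [sq_pos_of_ne_zero (Int.cast_ne_zero.2 h0 : (η.1 : ℚ) ≠ 0), sq_nonneg (η.2 : ℚ)]
    · nlinarith [sq_pos_of_ne_zero (Int.cast_ne_zero.2 h0 : (η.2 : ℚ) ≠ 0), sq_nonneg (η.1 : ℚ)]
  exact Prod.ext
    (mul_left_cancel₀ hpos.ne' (by linear_combination (η.1 : ℚ) * h.1 - (η.2 : ℚ) * h.2))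
    (mul_left_cancel₀ hpos.ne' (by linear_combination (η.2 : ℚ) * h.1 + (η.1 : ℚ) * h.2))

lemma IsLatticePolygon.exists_mem_vertices_forall_pairQ_le {Q : Set (ℚ × ℚ)}
    (hQ : IsLatticePolygon Q) {η : ℤ × ℤ} (hη : Int.gcd η.1 η.2 = 1) :
    ∃ p ∈ vertices Q, ∀ q ∈ Q, pairQ η p ≤ pairQ η q := by
  obtain ⟨⟨S, rfl⟩, hne⟩ := hQ
  rw [← coe_image] at hne ⊢
  exact exists_mem_extremePoints_convexHull_forall_le (pairL_prod_injective hη)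
    (coe_nonempty.1 (convexHull_nonempty_iff.1 (hne.mono interior_subset)))

lemma IsFacetWith.pairQ_nonneg_of_mem_posCone {Q F : Set (ℚ × ℚ)} {η : ℤ × ℤ} {l : ℤ}
    (hF : IsFacetWith Q η l F) {x : ℚ × ℚ} (hx : x ∈ posCone F) : 0 ≤ pairQ η x := by
  obtain ⟨-, hl, -, rfl, -⟩ := hF
  obtain ⟨t, ht, z, ⟨-, hz⟩, rfl⟩ := hx
  rw [← pairL_apply, map_smul, pairL_apply, hz, smul_eq_mul]
  exact mul_nonneg ht (Int.cast_nonneg hl.le)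

/-- If `F` is a special facet of an LDP-polygon `Q` (the sum of the vertices of `Q`
lies in `pos(F)`) with local index `l`, then
`Q ⊆ {v : −l(l+1) ≤ ⟨η_F, v⟩ ≤ l}`. -/
theorem special_facet_bound
    (Q F : Set (ℚ × ℚ)) (η : ℤ × ℤ) (l : ℤ)
    (hQ : IsLDPPolygon Q) (hF : IsFacetWith Q η l F)
    (V : Finset (ℚ × ℚ)) (hV : (V : Set (ℚ × ℚ)) = vertices Q)
    (hspecial : (∑ v ∈ V, v) ∈ posCone F) :
    Q ⊆ {v : ℚ × ℚ | -(l : ℚ) * ((l : ℚ) + 1) ≤ pairQ η v ∧ pairQ η v ≤ (l : ℚ)} := by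
  have hsum := hF.pairQ_nonneg_of_mem_posCone hspecial
  obtain ⟨⟨hlat, -⟩, hprim⟩ := hQ
  obtain ⟨hη, hl, hle, -, -⟩ := hF
  obtain ⟨p, hp, hpmin⟩ := hlat.exists_mem_vertices_forall_pairQ_le hη
  have hvert : ∀ v ∈ V, v ∈ vertices Q := fun v hv => (Set.ext_iff.1 hV v).1 hv
  set H : ℚ × ℚ → ℤ := fun v => (pairQ η v).num
  have hH : ∀ v ∈ V, (H v : ℚ) = pairQ η v := fun v hv => by
    obtain ⟨q, -, rfl⟩ := hprim v (hvert v hv)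
    exact cast_num_pairQ_toQ η q
  have hHle : ∀ v ∈ V, H v ≤ l := fun v hv => by
    exact_mod_cast (hH v hv).trans_le (hle v (extremePoints_subset (hvert v hv)))
  have hHsum : 0 ≤ ∑ v ∈ V, H v := by
    rw [← pairL_apply, map_sum] at hsum
    exact_mod_cast (sum_congr rfl hH).trans_ge hsum
  have hfib : ∀ h, #{v ∈ V | H v = h} ≤ 2 := fun h =>
    card_le_two_of_subset_extremePoints (pairL_prod_injective hη) (A := Q) (c := (h : ℚ))
      (fun v hv => hvert v (mem_filter.1 hv).1)
      (fun v hv => by rw [pairL_apply, ← hH v (mem_filter.1 hv).1, (mem_filter.1 hv).2])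
  have hpV : p ∈ V := (Set.ext_iff.1 hV p).2 hp
  have hHp := neg_mul_add_one_le_of_sum_nonneg V H hl.le hHle hfib hHsum hpV
  intro q hq
  refine ⟨?_, hle q hq⟩
  calc -(l : ℚ) * ((l : ℚ) + 1) = ((-(l * (l + 1)) : ℤ) : ℚ) := by push_cast; ring
    _ ≤ H p := by exact_mod_cast hHp
    _ = pairQ η p := hH p hpV
    _ ≤ pairQ η q := hpmin q hq
end
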